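/- arXiv:2206.12041 — 7 statements merged into one kernel-verified Lean document; each statement's English description precedes it below -/
import Mathlib

section
/- Let A, B ∈ ℝ^{d×d} be symmetric matrices with AB = BA = 0 such that A + B is invertible. Then (A + B)^{-1} = A† + B†, where † denotes the Moore–Penrose pseudoinverse. -/
open Matrix

/-- If `A, B` are symmetric real matrices with `AB = BA = 0` and `A + B` invertible, then
`(A + B)⁻¹ = A† + B†`, where `A†, B†` are the (unique) Moore–Penrose pseudoinverses of
`A` and `B`, characterized by the four Penrose conditions. -/
theorem inv_add_eq_pinv_add_pinv {d : ℕ} (A B Ad Bd : Matrix (Fin d) (Fin d) ℝ)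
    (hA : A.IsSymm) (hB : B.IsSymm)
    (hAB : A * B = 0) (hBA : B * A = 0) (hinv : IsUnit (A + B))
    (hAd1 : A * Ad * A = A) (hAd2 : Ad * A * Ad = Ad)
    (hAd3 : (A * Ad).IsSymm) (hAd4 : (Ad * A).IsSymm)
    (hBd1 : B * Bd * B = B) (hBd2 : Bd * B * Bd = Bd)
    (hBd3 : (B * Bd).IsSymm) (hBd4 : (Bd * B).IsSymm) :
    (A + B)⁻¹ = Ad + Bd := by
  have hA' : Aᵀ = A := hA
  have hB' : Bᵀ = B := hB
  -- A * Ad = Adᵀ * A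
  have h1 : A * Ad = Adᵀ * A := by
    have := hAd3; rw [Matrix.IsSymm, Matrix.transpose_mul, hA'] at this
    exact this.symm
  have h2 : Ad * A = A * Adᵀ := by
    have := hAd4; rw [Matrix.IsSymm, Matrix.transpose_mul, hA'] at this
    exact this.symm
  have h3 : B * Bd = Bdᵀ * B := by
    have := hBd3; rw [Matrix.IsSymm, Matrix.transpose_mul, hB'] at this
    exact this.symm
  have h4 : Bd * B = B * Bdᵀ := by
    have := hBd4; rw [Matrix.IsSymm, Matrix.transpose_mul, hB'] at this
    exact this.symm
  have hAdB : Ad * B = 0 := by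
    calc Ad * B = Ad * (A * Ad) * B := by rw [← mul_assoc, hAd2]
    _ = Ad * Adᵀ * (A * B) := by rw [h1]; noncomm_ring
    _ = 0 := by rw [hAB, mul_zero]
  have hBAd : B * Ad = 0 := by
    calc B * Ad = B * ((Ad * A) * Ad) := by rw [hAd2]
    _ = (B * A) * (Adᵀ * Ad) := by rw [h2]; noncomm_ring
    _ = 0 := by rw [hBA, zero_mul]
  have hBdA : Bd * A = 0 := by
    calc Bd * A = Bd * (B * Bd) * A := by rw [← mul_assoc, hBd2]
    _ = Bd * Bdᵀ * (B * A) := by rw [h3]; noncomm_ring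
    _ = 0 := by rw [hBA, mul_zero]
  have hABd : A * Bd = 0 := by
    calc A * Bd = A * ((Bd * B) * Bd) := by rw [hBd2]
    _ = (A * B) * (Bdᵀ * Bd) := by rw [h4]; noncomm_ring
    _ = 0 := by rw [hAB, zero_mul]
  have key : (A + B) * ((Ad + Bd) * (A + B)) = (A + B) * 1 := by
    have : (A + B) * ((Ad + Bd) * (A + B)) =
        A * Ad * A + A * (Bd * A) + (A * Bd) * B + A * (Ad * B) +
        B * Bd * B + B * (Ad * A) + (B * Ad) * B + B * (Bd * A) := by
      noncomm_ring
    rw [this, hAd1, hBd1, hBdA, hABd, hAdB, hBAd]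
    have hBAdA : B * (Ad * A) = 0 := by
      rw [← mul_assoc, hBAd, zero_mul]
    rw [hBAdA]
    simp
  have hleft : (Ad + Bd) * (A + B) = 1 := hinv.mul_left_cancel key
  exact Matrix.inv_eq_left_inv hleft
end

section
/- Let β > 0 and let f : (0,∞) → ℝ be such that z ↦ z^{β-1} f(z) is integrable on (0,∞). Let Z be a real random variable such that |Z| has a density p on (0,∞), with sup_{z>0} z^{1-β} p(z) < ∞ and lim_{z→0} z^{1-β} p(z) = c_Z ∈ (0,∞). Then lim_{t→∞} t^β E[f(t|Z|)] = c_Z ∫_0^∞ z^{β-1} f(z) dz. -/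
/-!
Substituting `u = t z` turns `t^β E[f(t|Z|)]` into `∫_0^∞ u^{β-1} f(u) w(u/t) du` with
`w(z) = z^{1-β} p(z)`; as `w` is bounded and tends to `c_Z` at `0+`, dominated convergence gives
the limit. Since `p` need not be measurable, it is first replaced by a measurable density of `|Z|`
satisfying the same bounds at every point: the Radon–Nikodym derivative satisfies them almost
everywhere, and is then redefined on a null set.
-/

open MeasureTheory Filter Set

open scoped ENNReal Topology

theorem Real.rpow_one_sub_mul_rpow_sub_one {z : ℝ} (hz : 0 < z) (β : ℝ) :
    z ^ (1 - β) * z ^ (β - 1) = 1 := by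
  rw [← Real.rpow_add hz, sub_add_sub_cancel, sub_self, Real.rpow_zero]

theorem Real.rpow_one_sub_mul_mem_Icc_iff {z : ℝ} (hz : 0 < z) (β y a b : ℝ) :
    z ^ (1 - β) * y ∈ Icc a b ↔ y ∈ Icc (a * z ^ (β - 1)) (b * z ^ (β - 1)) := by
  have hpos : 0 < z ^ (β - 1) := Real.rpow_pos_of_pos hz _
  have hinv : z ^ (1 - β) = (z ^ (β - 1))⁻¹ := by
    rw [← Real.rpow_neg hz.le, neg_sub]
  rw [hinv, mem_Icc, mem_Icc, le_inv_mul_iff₀ hpos, inv_mul_le_iff₀ hpos, mul_comm a, mul_comm b]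

section DensityTransfer

variable {α : Type*} [MeasurableSpace α] {μ : Measure α} [SigmaFinite μ] {F G H : α → ℝ≥0∞}
  {s : Set α}

theorem ae_restrict_le_of_withDensity_eq_of_le (hG : Measurable G)
    (heq : μ.withDensity F = μ.withDensity G) (hs : MeasurableSet s) (h : ∀ x ∈ s, F x ≤ H x) :
    ∀ᵐ x ∂μ.restrict s, G x ≤ H x := by
  refine ae_le_of_forall_setLIntegral_le_of_sigmaFinite hG fun A hA _ => ?_
  rw [Measure.restrict_restrict hA, ← withDensity_apply G (hA.inter hs), ← heq,
    withDensity_apply F (hA.inter hs)]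
  exact lintegral_mono_ae ((ae_restrict_mem (hA.inter hs)).mono fun x hx => h x hx.2)

theorem ae_restrict_ge_of_withDensity_eq_of_ge (hH : Measurable H)
    (heq : μ.withDensity F = μ.withDensity G) (hs : MeasurableSet s) (h : ∀ x ∈ s, H x ≤ F x) :
    ∀ᵐ x ∂μ.restrict s, H x ≤ G x := by
  refine ae_le_of_forall_setLIntegral_le_of_sigmaFinite hH fun A hA _ => ?_
  rw [Measure.restrict_restrict hA, ← withDensity_apply G (hA.inter hs), ← heq,
    withDensity_apply F (hA.inter hs)]
  exact lintegral_mono_ae ((ae_restrict_mem (hA.inter hs)).mono fun x hx => h x hx.2)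

theorem ae_mem_Icc_of_withDensity_ofReal_eq {p r a b : α → ℝ} (hp : ∀ x, 0 ≤ p x)
    (hr : Measurable r) (hr0 : ∀ x, 0 ≤ r x)
    (heq : μ.withDensity (fun x => ENNReal.ofReal (p x)) =
      μ.withDensity (fun x => ENNReal.ofReal (r x)))
    (hs : MeasurableSet s) (ha : Measurable a) (h : ∀ x ∈ s, p x ∈ Icc (a x) (b x)) :
    ∀ᵐ x ∂μ, x ∈ s → r x ∈ Icc (a x) (b x) := by
  have hlow := ae_restrict_ge_of_withDensity_eq_of_ge ha.ennreal_ofReal heq hs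
    fun x hx => ENNReal.ofReal_le_ofReal (h x hx).1
  have hup := ae_restrict_le_of_withDensity_eq_of_le hr.ennreal_ofReal heq hs
    fun x hx => ENNReal.ofReal_le_ofReal (h x hx).2
  rw [← ae_restrict_iff' hs]
  filter_upwards [hlow, hup, ae_restrict_mem hs] with x hxa hxb hx
  exact ⟨(ENNReal.ofReal_le_ofReal_iff (hr0 x)).1 hxa,
    (ENNReal.ofReal_le_ofReal_iff ((hp x).trans (h x hx).2)).1 hxb⟩

end DensityTransfer

theorem ae_rpow_one_sub_mul_mem_Icc_of_withDensity_ofReal_eq {p r : ℝ → ℝ} {β : ℝ}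
    (hp : ∀ z, 0 ≤ p z) (hr : Measurable r) (hr0 : ∀ z, 0 ≤ r z)
    (heq : volume.withDensity (fun z => ENNReal.ofReal (p z)) =
      volume.withDensity (fun z => ENNReal.ofReal (r z)))
    {s : Set ℝ} (hs : MeasurableSet s) (hs0 : s ⊆ Ioi 0) {a b : ℝ}
    (h : ∀ z ∈ s, z ^ (1 - β) * p z ∈ Icc a b) :
    ∀ᵐ z, z ∈ s → z ^ (1 - β) * r z ∈ Icc a b := by
  have hr_Icc := ae_mem_Icc_of_withDensity_ofReal_eq hp hr hr0 heq hs (by fun_prop)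
    fun z hz => (Real.rpow_one_sub_mul_mem_Icc_iff (hs0 hz) β (p z) a b).1 (h z hz)
  filter_upwards [hr_Icc] with z hz hzs
  exact (Real.rpow_one_sub_mul_mem_Icc_iff (hs0 hzs) β (r z) a b).2 (hz hzs)

theorem exists_measurable_nonneg_withDensity_ofReal_eq {α : Type*} [MeasurableSpace α]
    {μ ν : Measure α} [SigmaFinite μ] [SigmaFinite ν] (hνμ : ν ≪ μ) :
    ∃ r : α → ℝ, Measurable r ∧ (∀ x, 0 ≤ r x) ∧
      ν = μ.withDensity fun x => ENNReal.ofReal (r x) := by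
  refine ⟨fun x => (ν.rnDeriv μ x).toReal, (Measure.measurable_rnDeriv ν μ).ennreal_toReal,
    fun x => ENNReal.toReal_nonneg, ?_⟩
  conv_lhs => rw [← Measure.withDensity_rnDeriv_eq ν μ hνμ]
  refine withDensity_congr_ae ?_
  filter_upwards [Measure.rnDeriv_lt_top ν μ] with x hx using (ENNReal.ofReal_toReal hx.ne).symm

theorem exists_measurable_ae_eq_forall {α γ : Type*} [MeasurableSpace α] [MeasurableSpace γ]
    {μ : Measure α} {P : α → γ → Prop} {g c : α → γ} (hg : Measurable g) (hc : Measurable c)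
    (hPg : ∀ᵐ x ∂μ, P x (g x)) (hPc : ∀ x, P x (c x)) :
    ∃ q : α → γ, Measurable q ∧ q =ᵐ[μ] g ∧ ∀ x, P x (q x) := by
  classical
  set S := toMeasurable μ {x | ¬P x (g x)}
  have hS : μ S = 0 := by rw [measure_toMeasurable]; exact ae_iff.1 hPg
  refine ⟨S.piecewise c g, hc.piecewise (measurableSet_toMeasurable _ _) hg, ?_, fun x => ?_⟩
  · filter_upwards [measure_eq_zero_iff_ae_notMem.1 hS] with x hx
    exact piecewise_eq_of_notMem _ _ _ hx
  · by_cases hx : x ∈ S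
    · simpa [piecewise_eq_of_mem _ _ _ hx] using hPc x
    · simpa [piecewise_eq_of_notMem _ _ _ hx] using
        not_not.1 fun h => hx (subset_toMeasurable μ _ h)

theorem tendsto_setIntegral_Ioi_mul_comp_inv_mul {h w : ℝ → ℝ} {c M : ℝ}
    (hh : IntegrableOn h (Ioi 0)) (hw : Measurable w) (hwM : ∀ z > 0, ‖w z‖ ≤ M)
    (hwc : Tendsto w (𝓝[>] 0) (𝓝 c)) :
    Tendsto (fun t => ∫ u in Ioi 0, h u * w (t⁻¹ * u)) atTop (𝓝 (c * ∫ u in Ioi 0, h u)) := by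
  rw [mul_comm, ← integral_mul_const]
  refine tendsto_integral_filter_of_dominated_convergence (fun u => ‖h u‖ * M)
    (.of_forall fun t => hh.aestronglyMeasurable.mul
      (hw.comp (measurable_const_mul _)).aestronglyMeasurable) ?_ (hh.norm.mul_const M) ?_
  · filter_upwards [eventually_gt_atTop 0] with t ht
    filter_upwards [ae_restrict_mem measurableSet_Ioi] with u hu
    rw [norm_mul]
    exact mul_le_mul_of_nonneg_left (hwM _ (mul_pos (inv_pos.2 ht) hu)) (norm_nonneg _)
  · filter_upwards [ae_restrict_mem measurableSet_Ioi] with u hu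
    have hscale : Tendsto (fun t : ℝ => t⁻¹ * u) atTop (𝓝[>] 0) := by
      refine tendsto_nhdsWithin_iff.2 ⟨by simpa using tendsto_inv_atTop_zero.mul_const u, ?_⟩
      filter_upwards [eventually_gt_atTop 0] with t ht using mul_pos (inv_pos.2 ht) hu
    exact tendsto_const_nhds.mul (hwc.comp hscale)

theorem rpow_mul_integral_comp_mul_withDensity {q : ℝ → ℝ} (hq : Measurable q)
    (hq0 : ∀ z, 0 ≤ q z) (hq_nonpos : ∀ z ≤ 0, q z = 0) (f : ℝ → ℝ) (β : ℝ) {t : ℝ}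
    (ht : 0 < t) :
    t ^ β * ∫ z, f (t * z) ∂volume.withDensity (fun z => ENNReal.ofReal (q z)) =
      ∫ u in Ioi 0, u ^ (β - 1) * f u * ((t⁻¹ * u) ^ (1 - β) * q (t⁻¹ * u)) := by
  have hdensity : ∫ z, f (t * z) ∂volume.withDensity (fun z => ENNReal.ofReal (q z)) =
      ∫ z in Ioi 0, q z * f (t * z) := by
    rw [integral_withDensity_eq_integral_toReal_smul hq.ennreal_ofReal
      (.of_forall fun _ => ENNReal.ofReal_lt_top)]
    refine (setIntegral_eq_integral_of_forall_compl_eq_zero fun z hz => ?_).symm.trans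
      (setIntegral_congr_fun measurableSet_Ioi fun z _ => ?_)
    · simp [hq_nonpos z (not_lt.1 hz)]
    · simp [ENNReal.toReal_ofReal (hq0 z)]
  have hscale : ∫ z in Ioi 0, q z * f (t * z) = t⁻¹ * ∫ u in Ioi 0, q (t⁻¹ * u) * f u := by
    simpa [inv_mul_cancel_left₀ ht.ne'] using
      integral_comp_mul_left_Ioi (fun u => q (t⁻¹ * u) * f u) 0 ht
  rw [hdensity, hscale, ← mul_assoc, ← integral_const_mul]
  refine setIntegral_congr_fun measurableSet_Ioi fun u (hu : 0 < u) => ?_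
  have hweight : t ^ β * t⁻¹ = u ^ (β - 1) * (t⁻¹ * u) ^ (1 - β) := by
    rw [Real.mul_rpow (inv_nonneg.2 ht.le) hu.le, Real.inv_rpow ht.le, ← Real.rpow_neg ht.le,
      neg_sub, mul_left_comm, mul_comm (u ^ (β - 1)), Real.rpow_one_sub_mul_rpow_sub_one hu,
      mul_one, Real.rpow_sub_one ht.ne', div_eq_mul_inv]
  rw [hweight]
  ring

structure IsRegularDensity (β c : ℝ) (q : ℝ → ℝ) : Prop where
  nonneg : ∀ z, 0 ≤ q z
  eq_zero_of_nonpos : ∀ z ≤ 0, q z = 0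
  bddAbove : ∃ C, ∀ z > 0, z ^ (1 - β) * q z ≤ C
  tendsto : Tendsto (fun z => z ^ (1 - β) * q z) (𝓝[>] 0) (𝓝 c)

/-- A countable family of pointwise bounds that implies `IsRegularDensity β c`; being countable,
it passes from a density to an a.e. equal one. -/
def RegularBounds (β c C : ℝ) (δ : ℕ → ℝ) (z y : ℝ) : Prop :=
  0 ≤ y ∧ (z ≤ 0 → y = 0) ∧ (0 < z → z ^ (1 - β) * y ≤ C) ∧
    ∀ k : ℕ, z ∈ Ioo 0 (δ k) → z ^ (1 - β) * y ∈ Icc (c - 1 / (k + 1)) (c + 1 / (k + 1))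

section RegularBounds

variable {β c C : ℝ} {δ : ℕ → ℝ}

theorem isRegularDensity_of_regularBounds {q : ℝ → ℝ} (hδ : ∀ k, 0 < δ k)
    (hq : ∀ z, RegularBounds β c C δ z (q z)) : IsRegularDensity β c q where
  nonneg z := (hq z).1
  eq_zero_of_nonpos z := (hq z).2.1
  bddAbove := ⟨C, fun z => (hq z).2.2.1⟩
  tendsto := Metric.nhds_basis_closedBall_inv_nat_succ.tendsto_right_iff.2 fun k _ =>
    (nhdsGT_basis 0).eventually_iff.2 ⟨δ k, hδ k, fun z hz => by
      simpa only [Real.closedBall_eq_Icc] using (hq z).2.2.2 k hz⟩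

theorem regularBounds_indicator (hc0 : 0 ≤ c) (hcC : c ≤ C) (z : ℝ) :
    RegularBounds β c C δ z ((Ioi 0).indicator (fun z => c * z ^ (β - 1)) z) := by
  by_cases hz : 0 < z
  · have hw : z ^ (1 - β) * (c * z ^ (β - 1)) = c := by
      rw [mul_left_comm, Real.rpow_one_sub_mul_rpow_sub_one hz, mul_one]
    have hk (k : ℕ) : (0 : ℝ) < 1 / (k + 1) := Nat.one_div_pos_of_nat
    rw [indicator_of_mem (show z ∈ Ioi 0 from hz)]
    refine ⟨by positivity, fun h => absurd h (not_le.2 hz), fun _ => hw.le.trans hcC,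
      fun k _ => ?_⟩
    rw [hw]
    exact ⟨by linarith [hk k], by linarith [hk k]⟩
  · rw [indicator_of_notMem (show z ∉ Ioi 0 from hz)]
    exact ⟨le_rfl, fun _ => rfl, fun h => absurd h hz, fun k hk => absurd hk.1 hz⟩

theorem ae_regularBounds_of_withDensity_eq {p r : ℝ → ℝ}
    (hp : ∀ z, RegularBounds β c C δ z (p z)) (hr : Measurable r) (hr0 : ∀ z, 0 ≤ r z)
    (heq : volume.withDensity (fun z => ENNReal.ofReal (p z)) =
      volume.withDensity (fun z => ENNReal.ofReal (r z))) :
    ∀ᵐ z, RegularBounds β c C δ z (r z) := by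
  have hp0 z := (hp z).1
  have hnonpos := ae_mem_Icc_of_withDensity_ofReal_eq hp0 hr hr0 heq
    (measurableSet_Iic (a := 0)) (measurable_const (a := 0)) (b := 0)
    fun z hz => by simp [(hp z).2.1 hz]
  have hbdd := ae_rpow_one_sub_mul_mem_Icc_of_withDensity_ofReal_eq hp0 hr hr0 heq
    measurableSet_Ioi subset_rfl fun z (hz : 0 < z) =>
      ⟨mul_nonneg (Real.rpow_nonneg hz.le _) (hp0 z), (hp z).2.2.1 hz⟩
  have hlocal := ae_all_iff.2 fun k => ae_rpow_one_sub_mul_mem_Icc_of_withDensity_ofReal_eq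
    hp0 hr hr0 heq measurableSet_Ioo Ioo_subset_Ioi_self fun z => (hp z).2.2.2 k
  filter_upwards [hnonpos, hbdd, hlocal] with z h1 h2 h3
  exact ⟨hr0 z, fun hz => le_antisymm (h1 hz).2 (h1 hz).1, fun hz => (h2 hz).2, h3⟩

end RegularBounds

namespace IsRegularDensity

variable {β c : ℝ} {p q : ℝ → ℝ}

theorem tendsto_rpow_mul_integral_comp (hq : Measurable q) (hreg : IsRegularDensity β c q)
    {f : ℝ → ℝ} (hf : IntegrableOn (fun z => z ^ (β - 1) * f z) (Ioi 0)) :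
    Tendsto (fun t => t ^ β * ∫ z, f (t * z) ∂volume.withDensity fun z => ENNReal.ofReal (q z))
      atTop (𝓝 (c * ∫ z in Ioi 0, z ^ (β - 1) * f z)) := by
  obtain ⟨C, hC⟩ := hreg.bddAbove
  have hbound : ∀ z > 0, ‖z ^ (1 - β) * q z‖ ≤ C := fun z hz => by
    rw [Real.norm_of_nonneg (mul_nonneg (Real.rpow_nonneg hz.le _) (hreg.nonneg z))]
    exact hC z hz
  refine (tendsto_setIntegral_Ioi_mul_comp_inv_mul hf (by fun_prop) hbound hreg.tendsto).congr' ?_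
  filter_upwards [eventually_gt_atTop 0] with t ht
  exact (rpow_mul_integral_comp_mul_withDensity hq hreg.nonneg hreg.eq_zero_of_nonpos f β ht).symm

theorem exists_regularBounds (hp : IsRegularDensity β c p) :
    ∃ C, ∃ δ : ℕ → ℝ, (∀ k, 0 < δ k) ∧ 0 ≤ c ∧ c ≤ C ∧ ∀ z, RegularBounds β c C δ z (p z) := by
  obtain ⟨C, hC⟩ := hp.bddAbove
  have hδ (k : ℕ) : ∃ δ > 0, ∀ z ∈ Ioo 0 δ,
      z ^ (1 - β) * p z ∈ Icc (c - 1 / (k + 1)) (c + 1 / (k + 1)) := by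
    simpa only [← Real.closedBall_eq_Icc] using (nhdsGT_basis 0).eventually_iff.1
      (Metric.nhds_basis_closedBall_inv_nat_succ.tendsto_right_iff.1 hp.tendsto k trivial)
  choose δ hδ0 hδ using hδ
  refine ⟨C, δ, hδ0, ?_, le_of_tendsto hp.tendsto (eventually_nhdsWithin_of_forall hC),
    fun z => ⟨hp.nonneg z, hp.eq_zero_of_nonpos z, hC z, fun k => hδ k z⟩⟩
  exact ge_of_tendsto hp.tendsto (eventually_nhdsWithin_of_forall
    fun z (hz : 0 < z) => mul_nonneg (Real.rpow_nonneg hz.le _) (hp.nonneg z))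

theorem exists_measurable_withDensity_eq (hp : IsRegularDensity β c p)
    [SigmaFinite (volume.withDensity fun z => ENNReal.ofReal (p z))] :
    ∃ q, Measurable q ∧ IsRegularDensity β c q ∧
      volume.withDensity (fun z => ENNReal.ofReal (q z)) =
        volume.withDensity fun z => ENNReal.ofReal (p z) := by
  obtain ⟨C, δ, hδ, hc0, hcC, hpC⟩ := hp.exists_regularBounds
  obtain ⟨r, hr, hr0, hpr⟩ := exists_measurable_nonneg_withDensity_ofReal_eq
    (withDensity_absolutelyContinuous volume fun z => ENNReal.ofReal (p z))
  obtain ⟨q, hq, hqr, hqC⟩ := exists_measurable_ae_eq_forall hr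
    ((by fun_prop : Measurable fun z => c * z ^ (β - 1)).indicator measurableSet_Ioi)
    (ae_regularBounds_of_withDensity_eq hpC hr hr0 hpr) (regularBounds_indicator hc0 hcC)
  refine ⟨q, hq, isRegularDensity_of_regularBounds hδ hqC, ?_⟩
  rw [hpr]
  exact withDensity_congr_ae (hqr.fun_comp ENNReal.ofReal)

end IsRegularDensity

/-- If `|Z|` has a `(β, c_Z)`-regular density `p` on `(0,∞)` and `z^{β-1} f(z)` is
integrable on `(0,∞)`, then `t^β E[f(t|Z|)] → c_Z ∫_0^∞ z^{β-1} f(z) dz` as `t → ∞`. -/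
theorem tendsto_rpow_mul_integral_comp {Ω : Type*} [MeasurableSpace Ω]
    (μ : Measure Ω) [IsProbabilityMeasure μ]
    (Z : Ω → ℝ) (hZ : Measurable Z) (β cZ : ℝ)
    (p : ℝ → ℝ) (hp0 : ∀ z, 0 ≤ p z) (hpsupp : ∀ z ≤ (0 : ℝ), p z = 0)
    (hdens : Measure.map (fun ω => |Z ω|) μ =
      (volume : Measure ℝ).withDensity (fun z => ENNReal.ofReal (p z)))
    (hbound : ∃ C, ∀ z > (0 : ℝ), z ^ (1 - β) * p z ≤ C)
    (hlim : Tendsto (fun z => z ^ (1 - β) * p z) (nhdsWithin 0 (Ioi 0)) (nhds cZ))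
    (f : ℝ → ℝ) (hfm : Measurable f)
    (hf : IntegrableOn (fun z => z ^ (β - 1) * f z) (Ioi 0)) :
    Tendsto (fun t => t ^ β * ∫ ω, f (t * |Z ω|) ∂μ) atTop
      (nhds (cZ * ∫ z in Ioi (0 : ℝ), z ^ (β - 1) * f z)) := by
  have : IsFiniteMeasure (volume.withDensity fun z => ENNReal.ofReal (p z)) := by
    rw [← hdens]
    infer_instance
  obtain ⟨q, hq, hq_reg, hqp⟩ :=
    (IsRegularDensity.mk hp0 hpsupp hbound hlim).exists_measurable_withDensity_eq
  have hlaw (t : ℝ) : ∫ ω, f (t * |Z ω|) ∂μ =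
      ∫ z, f (t * z) ∂volume.withDensity fun z => ENNReal.ofReal (q z) := by
    rw [hqp, ← hdens]
    exact (integral_map hZ.abs.aemeasurable
      (hfm.comp (measurable_const_mul t)).aestronglyMeasurable).symm
  simpa only [hlaw] using hq_reg.tendsto_rpow_mul_integral_comp hq hf
end

section
/- Let X be a random vector in ℝ^d that decomposes as X = W + Z u*, where u* is a unit vector, W ⟂⟂ Z, ⟨W, u*⟩ = 0, E[W] = 0, E[Z] = 0, and X has nonsingular covariance Σ. Let σ : ℝ → [0,1] be differentiable with σ' > 0, and let φ : ℝ → [0,1] be measurable. Define L(θ) = E[ℓ_{σ,θ}(1|X) φ(⟨X,θ*⟩) + ℓ_{σ,θ}(-1|X)(1 - φ(⟨X,θ*⟩))] where ℓ_{σ,θ}(y|x) = -∫_0^{y⟨θ,x⟩} σ(-v) dv and θ* = t* u* with t* > 0. Then for θ = t u*, the gradient satisfies ∇L(t u*) = h(t) u* where h(t) = E[σ(tZ) Z (1 - φ(t* Z))] - E[σ(-tZ) Z φ(t* Z)]. -/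
/-!
For a fixed sample the loss depends on `θ` only through the margin `⟨θ, X⟩`, and its derivative in
the margin is bounded by `1` because `σ` takes values in `[0, 1]`. Differentiation under the
integral sign, dominated by `‖X‖`, therefore gives `∇L(θ) = E[c(⟨θ, X⟩) X]` for an explicit
bounded coefficient `c`. At `θ = t u*` the margin is `t Z`, so the coefficient is a function of
`Z` alone; splitting `X = W + Z u*`, independence and `E[W] = 0` kill the `W`-part and what is
left is `E[c(t Z) Z] u* = h(t) u*`.
-/

open MeasureTheory RealInnerProductSpace

/-- The link-based loss `ℓ_{σ,θ}(y|x) = -∫_0^{y⟨θ,x⟩} σ(-v) dv`, as a function of the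
margin `s = y⟨θ,x⟩`. -/
noncomputable def linkLoss (σ : ℝ → ℝ) (s : ℝ) : ℝ := -(∫ v in (0 : ℝ)..s, σ (-v))

open Set

/-- Expected link loss at margin `m` of a label that is `1` with probability `p` and `-1`
otherwise; `L θ` is the expectation of `expectedLinkLoss σ (φ ⟨X, θ*⟩) ⟨θ, X⟩`. -/
noncomputable def expectedLinkLoss (σ : ℝ → ℝ) (p m : ℝ) : ℝ :=
  linkLoss σ m * p + linkLoss σ (-m) * (1 - p)

def expectedLinkLossDeriv (σ : ℝ → ℝ) (p m : ℝ) : ℝ :=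
  σ m * (1 - p) - σ (-m) * p

section LinkLoss

variable {σ : ℝ → ℝ}

theorem norm_le_one_of_mem_Icc {x : ℝ} (hx : x ∈ Icc (0 : ℝ) 1) : ‖x‖ ≤ 1 :=
  abs_le.2 ⟨by linarith [hx.1], hx.2⟩

theorem linkLoss_hasDerivAt (hσ : Continuous σ) (s : ℝ) :
    HasDerivAt (linkLoss σ) (-σ (-s)) s :=
  ((hσ.comp continuous_neg).integral_hasStrictDerivAt 0 s).hasDerivAt.neg

theorem continuous_linkLoss (hσ : Continuous σ) : Continuous (linkLoss σ) :=
  continuous_iff_continuousAt.2 fun s => (linkLoss_hasDerivAt hσ s).continuousAt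

theorem abs_linkLoss_le (hσ : ∀ s, σ s ∈ Icc (0 : ℝ) 1) (s : ℝ) : |linkLoss σ s| ≤ |s| := by
  have hbound : ∀ v ∈ uIoc (0 : ℝ) s, ‖σ (-v)‖ ≤ 1 := fun v _ => norm_le_one_of_mem_Icc (hσ (-v))
  simpa [linkLoss] using intervalIntegral.norm_integral_le_of_norm_le_const hbound

theorem expectedLinkLoss_hasDerivAt (hσ : Continuous σ) (p m : ℝ) :
    HasDerivAt (expectedLinkLoss σ p) (expectedLinkLossDeriv σ p m) m := by
  have h := ((linkLoss_hasDerivAt hσ m).mul_const p).add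
    (((linkLoss_hasDerivAt hσ (-m)).comp m (hasDerivAt_neg m)).mul_const (1 - p))
  refine h.congr_deriv ?_
  simp only [expectedLinkLossDeriv, neg_neg]
  ring

theorem continuous_expectedLinkLoss (hσ : Continuous σ) :
    Continuous fun q : ℝ × ℝ => expectedLinkLoss σ q.1 q.2 := by
  have := continuous_linkLoss hσ
  unfold expectedLinkLoss
  fun_prop

theorem continuous_expectedLinkLossDeriv (hσ : Continuous σ) :
    Continuous fun q : ℝ × ℝ => expectedLinkLossDeriv σ q.1 q.2 := by
  unfold expectedLinkLossDeriv
  fun_prop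

theorem abs_expectedLinkLoss_le (hσ : ∀ s, σ s ∈ Icc (0 : ℝ) 1) {p : ℝ} (hp : p ∈ Icc (0 : ℝ) 1)
    (m : ℝ) : |expectedLinkLoss σ p m| ≤ |m| := by
  have h₁ := abs_linkLoss_le hσ m
  have h₂ := abs_linkLoss_le hσ (-m)
  rw [abs_neg] at h₂
  calc |expectedLinkLoss σ p m| ≤ |linkLoss σ m| * p + |linkLoss σ (-m)| * (1 - p) := by
        unfold expectedLinkLoss
        refine (abs_add_le _ _).trans ?_
        rw [abs_mul, abs_mul, abs_of_nonneg hp.1, abs_of_nonneg (sub_nonneg.2 hp.2)]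
    _ ≤ |m| * p + |m| * (1 - p) := by
        gcongr
        · exact hp.1
        · exact sub_nonneg.2 hp.2
    _ = |m| := by ring

theorem abs_expectedLinkLossDeriv_le (hσ : ∀ s, σ s ∈ Icc (0 : ℝ) 1) {p : ℝ}
    (hp : p ∈ Icc (0 : ℝ) 1) (m : ℝ) : |expectedLinkLossDeriv σ p m| ≤ 1 := by
  obtain ⟨h₁, h₁'⟩ := hσ m
  obtain ⟨h₂, h₂'⟩ := hσ (-m)
  obtain ⟨hp₀, hp₁⟩ := hp
  rw [expectedLinkLossDeriv, abs_le]
  constructor <;> nlinarith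

end LinkLoss

section Gradient

variable {Ω E : Type*} [MeasurableSpace Ω] {μ : Measure Ω}
  [NormedAddCommGroup E] [InnerProductSpace ℝ E] {σ : ℝ → ℝ}

theorem hasFDerivAt_expectedLinkLoss_inner (hσ : Continuous σ) (p : ℝ) (x θ : E) :
    HasFDerivAt (fun θ => expectedLinkLoss σ p ⟪θ, x⟫)
      (innerSL ℝ (expectedLinkLossDeriv σ p ⟪θ, x⟫ • x)) θ := by
  have hinner : HasFDerivAt (fun θ : E => ⟪θ, x⟫) (innerSL ℝ x) θ := by
    have h : (fun θ : E => ⟪θ, x⟫) = innerSL ℝ x := funext fun θ => real_inner_comm x θ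
    exact h ▸ (innerSL ℝ x).hasFDerivAt
  refine ((expectedLinkLoss_hasDerivAt hσ p _).comp_hasFDerivAt θ hinner).congr_fderiv ?_
  ext v
  simp

theorem hasGradientAt_integral_expectedLinkLoss [CompleteSpace E] (hσ : Continuous σ)
    (hσ01 : ∀ s, σ s ∈ Icc (0 : ℝ) 1) {p : Ω → ℝ} (hp : AEStronglyMeasurable p μ)
    (hp01 : ∀ ω, p ω ∈ Icc (0 : ℝ) 1) {X : Ω → E} (hX : Integrable X μ) (θ₀ : E) :
    HasGradientAt (fun θ => ∫ ω, expectedLinkLoss σ (p ω) ⟪θ, X ω⟫ ∂μ)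
      (∫ ω, expectedLinkLossDeriv σ (p ω) ⟪θ₀, X ω⟫ • X ω ∂μ) θ₀ := by
  have hmeas : ∀ θ : E, AEStronglyMeasurable (fun ω => expectedLinkLoss σ (p ω) ⟪θ, X ω⟫) μ :=
    fun θ => (continuous_expectedLinkLoss hσ).comp_aestronglyMeasurable₂ hp
      (aestronglyMeasurable_const.inner hX.1)
  have hint : Integrable (fun ω => expectedLinkLoss σ (p ω) ⟪θ₀, X ω⟫) μ := by
    refine (hX.norm.const_mul ‖θ₀‖).mono' (hmeas θ₀) (.of_forall fun ω => ?_)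
    exact (abs_expectedLinkLoss_le hσ01 (hp01 ω) _).trans (abs_real_inner_le_norm _ _)
  have hcoeff_meas : AEStronglyMeasurable (fun ω => expectedLinkLossDeriv σ (p ω) ⟪θ₀, X ω⟫) μ :=
    (continuous_expectedLinkLossDeriv hσ).comp_aestronglyMeasurable₂ hp
      (aestronglyMeasurable_const.inner hX.1)
  have hderiv_meas : AEStronglyMeasurable
      (fun ω => innerSL ℝ (expectedLinkLossDeriv σ (p ω) ⟪θ₀, X ω⟫ • X ω)) μ :=
    (innerSL ℝ).continuous.comp_aestronglyMeasurable (hcoeff_meas.smul hX.1)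
  have hderiv_le : ∀ θ ω,
      ‖innerSL ℝ (expectedLinkLossDeriv σ (p ω) ⟪θ, X ω⟫ • X ω)‖ ≤ ‖X ω‖ := by
    intro θ ω
    rw [innerSL_apply_norm, norm_smul]
    exact mul_le_of_le_one_left (norm_nonneg _) (abs_expectedLinkLossDeriv_le hσ01 (hp01 ω) _)
  have hderiv := hasFDerivAt_integral_of_dominated_of_fderiv_le (μ := μ) (x₀ := θ₀) Filter.univ_mem
    (.of_forall hmeas) hint hderiv_meas (.of_forall fun ω θ _ => hderiv_le θ ω) hX.norm
    (.of_forall fun ω θ _ => hasFDerivAt_expectedLinkLoss_inner hσ (p ω) (X ω) θ)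
  have hgrad_int : Integrable (fun ω => expectedLinkLossDeriv σ (p ω) ⟪θ₀, X ω⟫ • X ω) μ :=
    hX.bdd_smul 1 hcoeff_meas
      (.of_forall fun ω => abs_expectedLinkLossDeriv_le hσ01 (hp01 ω) _)
  rw [hasGradientAt_iff_hasFDerivAt]
  exact ContinuousLinearMap.integral_comp_commSL (by simp) (innerSL ℝ) hgrad_int ▸ hderiv

end Gradient

section Expectation

variable {Ω : Type*} [MeasurableSpace Ω] {μ : Measure Ω}

theorem integral_expectedLinkLossDeriv_mul {σ : ℝ → ℝ} (hσ : Continuous σ)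
    (hσ01 : ∀ s, σ s ∈ Icc (0 : ℝ) 1) {p m Z : Ω → ℝ} (hp : AEStronglyMeasurable p μ)
    (hp01 : ∀ ω, p ω ∈ Icc (0 : ℝ) 1) (hm : AEStronglyMeasurable m μ) (hZ : Integrable Z μ) :
    ∫ ω, expectedLinkLossDeriv σ (p ω) (m ω) * Z ω ∂μ =
      (∫ ω, σ (m ω) * Z ω * (1 - p ω) ∂μ) - ∫ ω, σ (-m ω) * Z ω * p ω ∂μ := by
  have hpos : Integrable (fun ω => σ (m ω) * Z ω * (1 - p ω)) μ :=
    (hZ.bdd_mul (hσ.comp_aestronglyMeasurable hm)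
      (.of_forall fun ω => norm_le_one_of_mem_Icc (hσ01 _))).mul_bdd
      (aestronglyMeasurable_const.sub hp)
      (.of_forall fun ω => norm_le_one_of_mem_Icc (Icc.mem_iff_one_sub_mem.1 (hp01 ω)))
  have hneg : Integrable (fun ω => σ (-m ω) * Z ω * p ω) μ :=
    (hZ.bdd_mul (hσ.comp_aestronglyMeasurable hm.neg)
      (.of_forall fun ω => norm_le_one_of_mem_Icc (hσ01 _))).mul_bdd hp
      (.of_forall fun ω => norm_le_one_of_mem_Icc (hp01 ω))
  rw [← integral_sub hpos hneg]
  congr 1 with ω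
  rw [expectedLinkLossDeriv]
  ring

theorem integral_comp_smul_add_smul_of_indepFun {E : Type*} [NormedAddCommGroup E]
    [NormedSpace ℝ E] [CompleteSpace E] [MeasurableSpace E] [BorelSpace E] {W : Ω → E} {Z : Ω → ℝ}
    (hindep : ProbabilityTheory.IndepFun W Z μ) (hW : Integrable W μ) (hEW : ∫ ω, W ω ∂μ = 0)
    (hZ : Integrable Z μ) {g : ℝ → ℝ} (hg : Measurable g) {C : ℝ} (hgC : ∀ z, ‖g z‖ ≤ C)
    (u : E) :
    ∫ ω, g (Z ω) • (W ω + Z ω • u) ∂μ = (∫ ω, g (Z ω) * Z ω ∂μ) • u := by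
  have hgZ : AEStronglyMeasurable (fun ω => g (Z ω)) μ :=
    (hg.comp_aemeasurable hZ.aemeasurable).aestronglyMeasurable
  have hgW_int : Integrable (fun ω => g (Z ω) • W ω) μ :=
    hW.bdd_smul C hgZ (.of_forall fun ω => hgC _)
  have hgZ_int : Integrable (fun ω => g (Z ω) * Z ω) μ :=
    hZ.bdd_mul hgZ (.of_forall fun ω => hgC _)
  have hgW : ∫ ω, g (Z ω) • W ω ∂μ = 0 := by
    have hindep' : ProbabilityTheory.IndepFun (fun ω => g (Z ω)) W μ :=
      hindep.symm.comp hg measurable_id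
    rw [hindep'.integral_fun_smul_eq_smul_integral hgZ hW.1, hEW, smul_zero]
  simp_rw [smul_add, smul_smul]
  rw [integral_add hgW_int (hgZ_int.smul_const u), hgW, zero_add, integral_smul_const]

end Expectation

theorem population_gradient_radial_general {Ω : Type*} [MeasurableSpace Ω]
    (μ : Measure Ω) [IsProbabilityMeasure μ] {d : ℕ}
    (X W : Ω → EuclideanSpace ℝ (Fin d)) (Z : Ω → ℝ)
    (u : EuclideanSpace ℝ (Fin d)) (hu : ‖u‖ = 1)
    (hdecomp : ∀ ω, X ω = W ω + Z ω • u)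
    (hWmeas : Measurable W) (hZmeas : Measurable Z)
    (hindep : ProbabilityTheory.IndepFun W Z μ)
    (hWperp : ∀ ω, ⟪W ω, u⟫ = 0)
    (hEW : ∫ ω, W ω ∂μ = 0)
    (hXint : Integrable (fun ω => ‖X ω‖) μ)
    (σ σ' : ℝ → ℝ) (hσ01 : ∀ s, σ s ∈ Set.Icc (0 : ℝ) 1)
    (hσderiv : ∀ s, HasDerivAt σ (σ' s) s)
    (φ : ℝ → ℝ) (hφ : Measurable φ) (hφ01 : ∀ s, φ s ∈ Set.Icc (0 : ℝ) 1)
    (ts : ℝ)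
    (L : EuclideanSpace ℝ (Fin d) → ℝ)
    (hL : ∀ θ, L θ = ∫ ω,
      (linkLoss σ (1 * ⟪θ, X ω⟫) * φ (⟪X ω, ts • u⟫) +
        linkLoss σ ((-1) * ⟪θ, X ω⟫) * (1 - φ (⟪X ω, ts • u⟫))) ∂μ)
    (h : ℝ → ℝ)
    (hh : ∀ s, h s = (∫ ω, σ (s * Z ω) * Z ω * (1 - φ (ts * Z ω)) ∂μ) -
      ∫ ω, σ (-(s * Z ω)) * Z ω * φ (ts * Z ω) ∂μ)
    (t : ℝ) :
    HasGradientAt L (h t • u) (t • u) := by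
  have hσ : Continuous σ := continuous_iff_continuousAt.2 fun s => (hσderiv s).continuousAt
  have hXu : ∀ ω, ⟪X ω, u⟫ = Z ω := fun ω => by
    rw [hdecomp, inner_add_left, hWperp, real_inner_smul_left, real_inner_self_eq_norm_sq, hu]
    ring
  have hXmeas : Measurable X := by
    rw [funext hdecomp]
    exact hWmeas.add (hZmeas.smul_const u)
  have hX : Integrable X μ := (integrable_norm_iff hXmeas.aestronglyMeasurable).1 hXint
  have hZ : Integrable Z μ := hX.norm.mono' hZmeas.aestronglyMeasurable (.of_forall fun ω => by
    simpa [← hXu, hu] using abs_real_inner_le_norm (X ω) u)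
  have hW : Integrable W μ := by
    have hW_eq : W = fun ω => X ω - Z ω • u := funext fun ω => by rw [hdecomp, add_sub_cancel_right]
    exact hW_eq ▸ hX.sub (hZ.smul_const u)
  have hp : AEStronglyMeasurable (fun ω => φ (ts * Z ω)) μ :=
    (hφ.comp (hZmeas.const_mul ts)).aestronglyMeasurable
  have hL' : L = fun θ => ∫ ω, expectedLinkLoss σ (φ (ts * Z ω)) ⟪θ, X ω⟫ ∂μ := by
    funext θ
    rw [hL]
    simp only [expectedLinkLoss, real_inner_smul_right, hXu, one_mul, neg_one_mul]
  have hgrad_eq : ∫ ω, expectedLinkLossDeriv σ (φ (ts * Z ω)) ⟪t • u, X ω⟫ • X ω ∂μ = h t • u := by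
    simp_rw [real_inner_smul_left, real_inner_comm _ u, hXu, hdecomp]
    rw [integral_comp_smul_add_smul_of_indepFun hindep hW hEW hZ (g := fun z =>
      expectedLinkLossDeriv σ (φ (ts * z)) (t * z)) (by unfold expectedLinkLossDeriv; fun_prop)
      (fun z => abs_expectedLinkLossDeriv_le hσ01 (hφ01 _) _),
      integral_expectedLinkLossDeriv_mul hσ hσ01 hp (fun ω => hφ01 _)
        (hZmeas.const_mul t).aestronglyMeasurable hZ, hh]
  rw [hL', ← hgrad_eq]
  exact hasGradientAt_integral_expectedLinkLoss hσ hσ01 hp (fun ω => hφ01 _) hX (t • u)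

/-- Under the independent decomposition `X = W + Z u*`, the gradient of the population
link-based loss at `θ = t u*` is radial: `∇L(t u*) = h(t) u*` with
`h(t) = E[σ(tZ) Z (1 - φ(t* Z))] - E[σ(-tZ) Z φ(t* Z)]`. -/
theorem population_gradient_radial {Ω : Type*} [MeasurableSpace Ω]
    (μ : Measure Ω) [IsProbabilityMeasure μ] {d : ℕ}
    (X W : Ω → EuclideanSpace ℝ (Fin d)) (Z : Ω → ℝ)
    (u : EuclideanSpace ℝ (Fin d)) (hu : ‖u‖ = 1)
    (hdecomp : ∀ ω, X ω = W ω + Z ω • u)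
    (hWmeas : Measurable W) (hZmeas : Measurable Z)
    (hindep : ProbabilityTheory.IndepFun W Z μ)
    (hWperp : ∀ ω, ⟪W ω, u⟫ = 0)
    (hEW : ∫ ω, W ω ∂μ = 0) (hEZ : ∫ ω, Z ω ∂μ = 0)
    (hXint : Integrable (fun ω => ‖X ω‖) μ)
    (σ σ' : ℝ → ℝ) (hσ01 : ∀ s, σ s ∈ Set.Icc (0 : ℝ) 1)
    (hσderiv : ∀ s, HasDerivAt σ (σ' s) s) (hσ'pos : ∀ s, 0 < σ' s)
    (φ : ℝ → ℝ) (hφ : Measurable φ) (hφ01 : ∀ s, φ s ∈ Set.Icc (0 : ℝ) 1)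
    (ts : ℝ) (hts : 0 < ts)
    (L : EuclideanSpace ℝ (Fin d) → ℝ)
    (hL : ∀ θ, L θ = ∫ ω,
      (linkLoss σ (1 * ⟪θ, X ω⟫) * φ (⟪X ω, ts • u⟫) +
        linkLoss σ ((-1) * ⟪θ, X ω⟫) * (1 - φ (⟪X ω, ts • u⟫))) ∂μ)
    (h : ℝ → ℝ)
    (hh : ∀ s, h s = (∫ ω, σ (s * Z ω) * Z ω * (1 - φ (ts * Z ω)) ∂μ) -
      ∫ ω, σ (-(s * Z ω)) * Z ω * φ (ts * Z ω) ∂μ)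
    (t : ℝ) :
    HasGradientAt L (h t • u) (t • u) :=
  population_gradient_radial_general μ X W Z u hu hdecomp hWmeas hZmeas hindep hWperp hEW hXint σ σ'
    hσ01 hσderiv φ hφ hφ01 ts L hL h hh t
end

section
/- Let m be odd, σ^lr(t) = 1/(1+e^{-t}) the logistic link, and ρ_m(t) = P(Binomial(m, σ^lr(|t|)) ≥ m/2). For a real random variable Z with continuous distribution, E[Z]=0, E[|Z|] < ∞, P(Z≠0)=1, and t* > 0, define h_m(t) = E[|Z|(1 - ρ_m(t*|Z|))] - E[|Z|/(1 + e^{t|Z|})]. Then h_m(t*) ≤ 0, h_m is strictly increasing in t, lim_{t→∞} h_m(t) = E[|Z|(1-ρ_m(t*|Z|))] > 0, and hence h_m has a unique zero t_m with t_m ≥ t*. -/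
open MeasureTheory Filter

/-- `Tmaj m t` is the probability that a `Binomial(m, t)` random variable is at least
`⌈m/2⌉`: for odd `m`, `⌈m/2⌉ = (m+1)/2` in natural-number division. -/
noncomputable def Tmaj (m : ℕ) (t : ℝ) : ℝ :=
  ∑ i ∈ Finset.Icc ((m + 1) / 2) m, (m.choose i : ℝ) * t ^ i * (1 - t) ^ (m - i)

/-- The logistic link `σ^lr(t) = 1/(1+e^{-t})`. -/
noncomputable def logisticLink (t : ℝ) : ℝ := 1 / (1 + Real.exp (-t))

/-- `ρ_m(t)`: the probability that majority vote over `m` i.i.d. logistic labels with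
margin `|t|` is correct. -/
noncomputable def rhoMaj (m : ℕ) (t : ℝ) : ℝ := Tmaj m (logisticLink |t|)

/-!
Write `m = 2k + 1` and `T(p) = P(Binomial(m, p) ≥ k + 1)`, so that `ρ_m(t) = T(σ(|t|))`.
Majority vote beats a single labeler, `T(p) ≥ p` on `[1/2, 1]`: the function `T(p) - p` vanishes
at `1/2` and at `1` (by the symmetry `T(p) + T(1 - p) = 1`), and it is concave on `[1/2, 1]`
because `T'(p) = m C(2k, k) (p(1 - p))^k` (the Bernstein derivatives telescope) decreases there.
With `1 - σ(s) = 1/(1 + e^s)` this gives `1 - ρ_m(s) ≤ 1/(1 + e^s)`, hence `h_m(t*) ≤ 0`.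

The integral `t ↦ E[|Z|/(1 + e^{t|Z|})]` is strictly decreasing because `|Z| > 0` almost surely
and tends to `0` by dominated convergence, so the intermediate value theorem gives the unique zero
of `h_m`, which lies to the right of `t*` because `h_m(t*) ≤ 0`.
-/

open Polynomial

/-- Evaluated at `p`, this is `P(Binomial(n, p) ≥ j)`. -/
noncomputable def bernsteinTail (R : Type*) [CommRing R] (n j : ℕ) : R[X] :=
  ∑ ν ∈ Finset.Ico j (n + 1), bernsteinPolynomial R n ν

section bernsteinTail

variable {R : Type*} [CommRing R]

theorem derivative_bernsteinTail {n j : ℕ} (h : j ≤ n + 1) :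
    derivative (bernsteinTail R (n + 1) (j + 1)) = (n + 1) * bernsteinPolynomial R n j := by
  rw [bernsteinTail, ← Finset.sum_Ico_add', derivative_sum]
  simp_rw [bernsteinPolynomial.derivative_succ_aux, ← Finset.mul_sum]
  have := Finset.sum_Ico_sub (f := fun ν => -bernsteinPolynomial R n ν) h
  simp only [sub_neg_eq_add, neg_add_eq_sub] at this
  rw [this, bernsteinPolynomial.eq_zero_of_lt R n.lt_succ_self, sub_zero]

theorem bernsteinTail_add_comp_one_sub {n j : ℕ} (h : j ≤ n + 1) :
    bernsteinTail R n j + (bernsteinTail R n (n + 1 - j)).comp (1 - X) = 1 := by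
  have hflip : (bernsteinTail R n (n + 1 - j)).comp (1 - X) =
      ∑ ν ∈ Finset.Ico (n + 1 - j) (n + 1), bernsteinPolynomial R n (n - ν) := by
    rw [bernsteinTail, sum_comp]
    refine Finset.sum_congr rfl fun ν hν => bernsteinPolynomial.flip R n ν ?_
    exact Nat.le_of_lt_succ (Finset.mem_Ico.1 hν).2
  rw [hflip, Finset.sum_Ico_reflect _ _ le_rfl, Nat.sub_sub_self h, Nat.sub_self, bernsteinTail,
    add_comm, Finset.sum_Ico_consecutive _ (Nat.zero_le j) h, ← Finset.range_eq_Ico,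
    bernsteinPolynomial.sum]

end bernsteinTail

theorem Tmaj_eq_eval (m : ℕ) (p : ℝ) :
    Tmaj m p = (bernsteinTail ℝ m ((m + 1) / 2)).eval p := by
  simp [Tmaj, bernsteinTail, eval_finsetSum, bernsteinPolynomial, Finset.Ico_add_one_right_eq_Icc]

section Tmaj

variable (k : ℕ)

theorem Tmaj_two_mul_add_one_eq_eval (p : ℝ) :
    Tmaj (2 * k + 1) p = (bernsteinTail ℝ (2 * k + 1) (k + 1)).eval p := by
  rw [Tmaj_eq_eval, show (2 * k + 1 + 1) / 2 = k + 1 by omega]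

theorem Tmaj_add_Tmaj_one_sub (p : ℝ) : Tmaj (2 * k + 1) p + Tmaj (2 * k + 1) (1 - p) = 1 := by
  have := congr_arg (eval p)
    (bernsteinTail_add_comp_one_sub (R := ℝ) (n := 2 * k + 1) (j := k + 1) (by omega))
  rw [show 2 * k + 1 + 1 - (k + 1) = k + 1 by omega, eval_add, eval_comp] at this
  simpa [Tmaj_two_mul_add_one_eq_eval] using this

theorem Tmaj_zero : Tmaj (2 * k + 1) 0 = 0 :=
  Finset.sum_eq_zero fun i hi => by
    simp [zero_pow (by have := (Finset.mem_Icc.1 hi).1; omega : i ≠ 0)]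

theorem Tmaj_one : Tmaj (2 * k + 1) 1 = 1 := by
  simpa [Tmaj_zero] using Tmaj_add_Tmaj_one_sub k 1

theorem Tmaj_half : Tmaj (2 * k + 1) (1 / 2) = 1 / 2 := by
  have := Tmaj_add_Tmaj_one_sub k (1 / 2)
  norm_num at this ⊢
  linarith

theorem Tmaj_pos {p : ℝ} (hp0 : 0 < p) (hp1 : p ≤ 1) : 0 < Tmaj (2 * k + 1) p := by
  have hq : 0 ≤ 1 - p := by linarith
  exact Finset.sum_pos' (fun i _ => by positivity)
    ⟨2 * k + 1, Finset.mem_Icc.2 ⟨by omega, le_rfl⟩, by simp [hp0]⟩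

theorem Tmaj_lt_one {p : ℝ} (hp0 : 0 ≤ p) (hp1 : p < 1) : Tmaj (2 * k + 1) p < 1 := by
  have := Tmaj_pos k (p := 1 - p) (by linarith) (by linarith)
  linarith [Tmaj_add_Tmaj_one_sub k p]

theorem hasDerivAt_Tmaj (p : ℝ) : HasDerivAt (Tmaj (2 * k + 1))
    ((2 * k + 1) * (bernsteinPolynomial ℝ (2 * k) k).eval p) p := by
  have := (bernsteinTail ℝ (2 * k + 1) (k + 1)).hasDerivAt p
  rw [derivative_bernsteinTail (by omega)] at this
  simpa [funext (Tmaj_two_mul_add_one_eq_eval k)] using this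

theorem antitoneOn_eval_bernsteinPolynomial :
    AntitoneOn (fun p => (bernsteinPolynomial ℝ (2 * k) k).eval p) (Set.Icc (1 / 2) 1) := by
  intro x ⟨hx, _⟩ y ⟨_, hy1⟩ hxy
  simp only [bernsteinPolynomial, eval_mul, eval_pow, eval_sub, eval_one, eval_X, eval_natCast,
    show 2 * k - k = k by omega, mul_assoc, ← mul_pow]
  gcongr ?_ * ?_ ^ k
  nlinarith

theorem le_Tmaj_self {p : ℝ} (hp : 1 / 2 ≤ p) (hp1 : p ≤ 1) : p ≤ Tmaj (2 * k + 1) p := by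
  have hderiv (x : ℝ) : HasDerivAt (fun x => Tmaj (2 * k + 1) x - x)
      ((2 * k + 1) * (bernsteinPolynomial ℝ (2 * k) k).eval x - 1) x :=
    (hasDerivAt_Tmaj k x).sub (hasDerivAt_id x)
  have hconcave : ConcaveOn ℝ (Set.Icc (1 / 2) 1) (fun x => Tmaj (2 * k + 1) x - x) := by
    refine AntitoneOn.concaveOn_of_deriv (convex_Icc _ _)
      (fun x _ => (hderiv x).continuousAt.continuousWithinAt)
      (fun x _ => (hderiv x).differentiableAt.differentiableWithinAt) ?_
    rw [interior_Icc]
    intro x hx y hy hxy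
    simp only [(hderiv _).deriv]
    gcongr
    exact antitoneOn_eval_bernsteinPolynomial k (Set.Ioo_subset_Icc_self hx)
      (Set.Ioo_subset_Icc_self hy) hxy
  have := hconcave.min_le_of_mem_Icc (by norm_num) (by norm_num) ⟨hp, hp1⟩
  simp only [Tmaj_half, Tmaj_one, sub_self, min_self] at this
  linarith

end Tmaj

theorem logisticLink_eq_sigmoid : logisticLink = Real.sigmoid :=
  funext fun _ => one_div _

theorem one_sub_sigmoid (t : ℝ) : 1 - Real.sigmoid t = 1 / (1 + Real.exp t) := by
  rw [← Real.sigmoid_neg, Real.sigmoid_def, neg_neg, one_div]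

theorem rhoMaj_lt_one {m : ℕ} (hm : Odd m) (t : ℝ) : rhoMaj m t < 1 := by
  obtain ⟨k, rfl⟩ := hm
  rw [rhoMaj, logisticLink_eq_sigmoid]
  exact Tmaj_lt_one k (Real.sigmoid_nonneg _) (Real.sigmoid_lt_one _)

theorem one_sub_rhoMaj_le {m : ℕ} (hm : Odd m) (t : ℝ) :
    1 - rhoMaj m t ≤ 1 / (1 + Real.exp t) := by
  obtain ⟨k, rfl⟩ := hm
  have hmajority : Real.sigmoid |t| ≤ rhoMaj (2 * k + 1) t := by
    rw [rhoMaj, logisticLink_eq_sigmoid]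
    refine le_Tmaj_self k ?_ (Real.sigmoid_le_one _)
    rw [one_div, ← Real.sigmoid_zero]
    exact Real.sigmoid_le (abs_nonneg t)
  calc 1 - rhoMaj (2 * k + 1) t ≤ 1 - Real.sigmoid |t| := by linarith
    _ ≤ 1 - Real.sigmoid t := by gcongr; exact le_abs_self t
    _ = 1 / (1 + Real.exp t) := one_sub_sigmoid t

@[fun_prop]
theorem continuous_rhoMaj (m : ℕ) : Continuous (rhoMaj m) := by
  have : Continuous (Tmaj m) := by
    simp_rw [funext (Tmaj_eq_eval m)]
    exact Polynomial.continuous _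
  unfold rhoMaj
  rw [logisticLink_eq_sigmoid]
  exact this.comp (continuous_sigmoid.comp continuous_abs)

section LogisticIntegral

open Real

variable {Ω : Type*} [MeasurableSpace Ω] {μ : Measure Ω} {w : Ω → ℝ}

theorem integral_pos_of_ae_pos [NeZero μ] {f : Ω → ℝ} (hf : Integrable f μ)
    (hpos : ∀ᵐ ω ∂μ, 0 < f ω) : 0 < ∫ ω, f ω ∂μ := by
  rw [integral_pos_iff_support_of_nonneg_ae (hpos.mono fun _ => le_of_lt) hf, pos_iff_ne_zero]
  intro hsupport
  obtain ⟨ω, hω, hω0⟩ := (hpos.and (measure_eq_zero_iff_ae_notMem.1 hsupport)).exists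
  exact hω0 hω.ne'

theorem abs_div_one_add_exp_le (x s : ℝ) : |x / (1 + exp s)| ≤ |x| := by
  rw [abs_div]
  exact div_le_self (abs_nonneg x) (by rw [abs_of_pos (by positivity)]; linarith [exp_pos s])

theorem tendsto_div_one_add_exp_mul_atTop {x : ℝ} (hx : 0 ≤ x) :
    Tendsto (fun t => x / (1 + exp (t * x))) atTop (nhds 0) := by
  rcases hx.eq_or_lt with rfl | hx
  · simp
  · exact tendsto_const_nhds.div_atTop <| tendsto_atTop_add_const_left _ _ <|
      tendsto_exp_atTop.comp (tendsto_id.atTop_mul_const hx)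

theorem strictAnti_div_one_add_exp_mul {x : ℝ} (hx : 0 < x) :
    StrictAnti fun t => x / (1 + exp (t * x)) := fun _ _ hlt => by
  dsimp only
  gcongr

variable (hw : Integrable w μ)
include hw

theorem integrable_div_one_add_exp_mul (t : ℝ) :
    Integrable (fun ω => w ω / (1 + exp (t * w ω))) μ :=
  hw.abs.mono' (((continuous_id.div (by fun_prop) fun _ => by positivity) :
      Continuous fun x => x / (1 + exp (t * x))).comp_aestronglyMeasurable hw.1)
    (ae_of_all _ fun ω => abs_div_one_add_exp_le _ _)

theorem continuous_integral_div_one_add_exp_mul :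
    Continuous fun t => ∫ ω, w ω / (1 + exp (t * w ω)) ∂μ :=
  continuous_of_dominated (fun t => (integrable_div_one_add_exp_mul hw t).1)
    (fun _ => ae_of_all _ fun _ => abs_div_one_add_exp_le _ _) hw.abs
    (ae_of_all _ fun _ => continuous_const.div (by fun_prop) fun _ => by positivity)

theorem tendsto_integral_div_one_add_exp_mul_atTop (hw0 : 0 ≤ᵐ[μ] w) :
    Tendsto (fun t => ∫ ω, w ω / (1 + exp (t * w ω)) ∂μ) atTop (nhds 0) := by
  simpa using tendsto_integral_filter_of_dominated_convergence _
    (Eventually.of_forall fun t => (integrable_div_one_add_exp_mul hw t).1)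
    (Eventually.of_forall fun _ => ae_of_all _ fun _ => abs_div_one_add_exp_le _ _) hw.abs
    (hw0.mono fun _ => tendsto_div_one_add_exp_mul_atTop)

theorem strictAnti_integral_div_one_add_exp_mul [NeZero μ] (hw0 : ∀ᵐ ω ∂μ, 0 < w ω) :
    StrictAnti fun t => ∫ ω, w ω / (1 + exp (t * w ω)) ∂μ := fun s t hst => by
  rw [← sub_pos, ← integral_sub (integrable_div_one_add_exp_mul hw s)
    (integrable_div_one_add_exp_mul hw t)]
  exact integral_pos_of_ae_pos ((integrable_div_one_add_exp_mul hw s).sub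
    (integrable_div_one_add_exp_mul hw t))
    (hw0.mono fun ω hω => sub_pos.2 (strictAnti_div_one_add_exp_mul hω hst))

end LogisticIntegral

theorem StrictMono.existsUnique_eq_zero {f : ℝ → ℝ} (hf : StrictMono f) (hcont : Continuous f)
    {a L : ℝ} (ha : f a ≤ 0) (hlim : Tendsto f atTop (nhds L)) (hL : 0 < L) :
    ∃! x, f x = 0 := by
  obtain ⟨b, hb, hab⟩ :=
    ((hlim.eventually (eventually_gt_nhds hL)).and (eventually_ge_atTop a)).exists
  obtain ⟨x, -, hx⟩ := intermediate_value_Icc hab hcont.continuousOn ⟨ha, hb.le⟩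
  exact ⟨x, hx, fun y hy => hf.injective (hy.trans hx.symm)⟩

theorem majority_vote_gap_general {Ω : Type*} [MeasurableSpace Ω]
    (μ : Measure Ω) [IsProbabilityMeasure μ]
    (m : ℕ) (hm : Odd m)
    (Z : Ω → ℝ) (hZ1 : Integrable Z μ)
    (hcont : ∀ z : ℝ, μ {ω | Z ω = z} = 0)
    (ts : ℝ)
    (h : ℝ → ℝ)
    (hdef : ∀ t, h t = (∫ ω, |Z ω| * (1 - rhoMaj m (ts * |Z ω|)) ∂μ) -
      ∫ ω, |Z ω| / (1 + Real.exp (t * |Z ω|)) ∂μ) :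
    h ts ≤ 0 ∧
    StrictMono h ∧
    (Tendsto h atTop (nhds (∫ ω, |Z ω| * (1 - rhoMaj m (ts * |Z ω|)) ∂μ)) ∧
      0 < ∫ ω, |Z ω| * (1 - rhoMaj m (ts * |Z ω|)) ∂μ) ∧
    ((∃! tm, h tm = 0) ∧ ∀ tm, h tm = 0 → ts ≤ tm) := by
  set A := ∫ ω, |Z ω| * (1 - rhoMaj m (ts * |Z ω|)) ∂μ
  set I := fun t => ∫ ω, |Z ω| / (1 + Real.exp (t * |Z ω|)) ∂μ
  have hh : h = fun t => A - I t := funext hdef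
  have hZ0 : ∀ᵐ ω ∂μ, 0 < |Z ω| :=
    (measure_eq_zero_iff_ae_notMem.1 (hcont 0)).mono fun _ => abs_pos.2
  have hI := integrable_div_one_add_exp_mul hZ1.abs
  have hmajority (ω : Ω) :
      |Z ω| * (1 - rhoMaj m (ts * |Z ω|)) ≤ |Z ω| / (1 + Real.exp (ts * |Z ω|)) := by
    rw [← mul_one_div]
    exact mul_le_mul_of_nonneg_left (one_sub_rhoMaj_le hm _) (abs_nonneg _)
  have hA_int : Integrable (fun ω => |Z ω| * (1 - rhoMaj m (ts * |Z ω|))) μ :=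
    (hI ts).mono' ((by fun_prop : Continuous fun z => |z| * (1 - rhoMaj m (ts * |z|)))
      |>.comp_aestronglyMeasurable hZ1.1) (ae_of_all _ fun ω => by
        have hρ := (rhoMaj_lt_one hm (ts * |Z ω|)).le
        rw [Real.norm_of_nonneg (mul_nonneg (abs_nonneg _) (sub_nonneg.2 hρ))]
        exact hmajority ω)
  have hle : h ts ≤ 0 := by
    rw [hdef, sub_nonpos]
    exact integral_mono hA_int (hI ts) hmajority
  have hmono : StrictMono h := fun s t hst => by
    rw [hdef, hdef]
    exact sub_lt_sub_left (strictAnti_integral_div_one_add_exp_mul hZ1.abs hZ0 hst) A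
  have hA : 0 < A := integral_pos_of_ae_pos hA_int
    (hZ0.mono fun ω hω => mul_pos hω (sub_pos.2 (rhoMaj_lt_one hm _)))
  have hlim : Tendsto h atTop (nhds A) := by
    simpa [hh] using tendsto_const_nhds.sub
      (tendsto_integral_div_one_add_exp_mul_atTop hZ1.abs (ae_of_all _ fun ω => abs_nonneg (Z ω)))
  have hh_cont : Continuous h :=
    hh ▸ continuous_const.sub (continuous_integral_div_one_add_exp_mul hZ1.abs)
  exact ⟨hle, hmono, ⟨hlim, hA⟩, hmono.existsUnique_eq_zero hh_cont hle hlim hA,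
    fun tm htm => hmono.le_iff_le.1 (htm ▸ hle)⟩

/-- The majority-vote calibration gap
`h_m(t) = E[|Z|(1 - ρ_m(t*|Z|))] - E[|Z|/(1 + e^{t|Z|})]` satisfies `h_m(t*) ≤ 0`, is
strictly increasing, tends to `E[|Z|(1 - ρ_m(t*|Z|))] > 0` at infinity, and has a unique
zero `t_m`, which satisfies `t_m ≥ t*`. -/
theorem majority_vote_gap {Ω : Type*} [MeasurableSpace Ω]
    (μ : Measure Ω) [IsProbabilityMeasure μ]
    (m : ℕ) (hm : Odd m)
    (Z : Ω → ℝ) (hZm : Measurable Z) (hZ1 : Integrable Z μ)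
    (hcont : ∀ z : ℝ, μ {ω | Z ω = z} = 0)
    (ts : ℝ) (hts : 0 < ts)
    (h : ℝ → ℝ)
    (hdef : ∀ t, h t = (∫ ω, |Z ω| * (1 - rhoMaj m (ts * |Z ω|)) ∂μ) -
      ∫ ω, |Z ω| / (1 + Real.exp (t * |Z ω|)) ∂μ) :
    h ts ≤ 0 ∧
    StrictMono h ∧
    (Tendsto h atTop (nhds (∫ ω, |Z ω| * (1 - rhoMaj m (ts * |Z ω|)) ∂μ)) ∧
      0 < ∫ ω, |Z ω| * (1 - rhoMaj m (ts * |Z ω|)) ∂μ) ∧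
    ((∃! tm, h tm = 0) ∧ ∀ tm, h tm = 0 → ts ≤ tm) :=
  majority_vote_gap_general μ m hm Z hZ1 hcont ts h hdef
end

section
/- For odd m ≥ 1 and any p ∈ [1/2, 1], P(Binomial(m, p) ≥ m/2) ≥ p. Equivalently, majority vote over m i.i.d. Bernoulli(p) labels with p ≥ 1/2 is correct with probability at least p. -/
/-- For odd `m` and `p ∈ [1/2, 1]`, majority vote over `m` i.i.d. `Bernoulli(p)` labels
is correct with probability at least `p`. -/
theorem majority_vote_ge_single (m : ℕ) (hm : Odd m) (p : ℝ)
    (hp : p ∈ Set.Icc (1 / 2 : ℝ) 1) :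
    p ≤ Tmaj m p := by
  obtain ⟨k, hk⟩ := hm
  obtain ⟨hp1, hp2⟩ := hp
  set q := 1 - p with hq
  have hq0 : 0 ≤ q := by simp [hq]; linarith
  have hqp : q ≤ p := by simp [hq]; linarith
  have hp0 : 0 ≤ p := by linarith
  have hm2 : (m + 1) / 2 = k + 1 := by omega
  set a : ℕ → ℝ := fun i => (m.choose i : ℝ) * p ^ i * q ^ (m - i) with ha
  set S1 := ∑ i ∈ Finset.Ico 0 (k + 1), a i with hS1
  set S2 := ∑ i ∈ Finset.Ico (k + 1) (m + 1), a i with hS2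
  have hTmaj : Tmaj m p = S2 := by
    rw [Tmaj, hm2, hS2]
    rw [show Finset.Icc (k+1) m = Finset.Ico (k+1) (m+1) from rfl]
  have hsplit : S1 + S2 = ∑ i ∈ Finset.range (m + 1), a i := by
    rw [hS1, hS2, Finset.range_eq_Ico]
    exact Finset.sum_Ico_consecutive _ (by omega) (by omega)
  have hsum : ∑ i ∈ Finset.range (m + 1), a i = 1 := by
    have h := add_pow p q m
    rw [show p + q = 1 by simp [hq]] at h
    rw [one_pow] at h
    rw [h]
    apply Finset.sum_congr rfl
    intro i _
    simp [ha]
    ring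
  have hre : ∑ i ∈ Finset.Ico (k + 1) (m + 1), q * a i
      = ∑ i ∈ Finset.Ico 0 (k + 1), q * a (m - i) := by
    apply Finset.sum_nbij' (i := fun i => m - i) (j := fun i => m - i)
    · intro i hi; simp only [Finset.mem_Ico] at hi ⊢; omega
    · intro i hi; simp only [Finset.mem_Ico] at hi ⊢; omega
    · intro i hi; simp only [Finset.mem_Ico] at hi; omega
    · intro i hi; simp only [Finset.mem_Ico] at hi; omega
    · intro i hi
      simp only [Finset.mem_Ico] at hi
      have h2 : m - (m - i) = i := by omega
      rw [h2]
  have key : p * S1 ≤ q * S2 := by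
    rw [hS1, hS2, Finset.mul_sum, Finset.mul_sum, hre]
    apply Finset.sum_le_sum
    intro i hi
    simp only [Finset.mem_Ico] at hi
    have hik : i ≤ k := by omega
    set d := m - 2 * i - 1 with hd
    have h1 : m - i = i + 1 + d := by omega
    have h2 : m - (m - i) = i := by omega
    have hai : a i = (m.choose i : ℝ) * p ^ i * q ^ (i + 1 + d) := by
      simp only [ha]; rw [h1]
    have hami : a (m - i) = (m.choose i : ℝ) * p ^ (i + 1 + d) * q ^ i := by
      simp only [ha]
      rw [h2, Nat.choose_symm (show i ≤ m by omega), h1]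
    rw [hai, hami]
    have hLHS : p * ((m.choose i : ℝ) * p ^ i * q ^ (i + 1 + d))
        = ((m.choose i : ℝ) * (p ^ (i+1) * q ^ (i+1))) * q ^ d := by ring
    have hRHS : q * ((m.choose i : ℝ) * p ^ (i + 1 + d) * q ^ i)
        = ((m.choose i : ℝ) * (p ^ (i+1) * q ^ (i+1))) * p ^ d := by ring
    rw [hLHS, hRHS]
    apply mul_le_mul_of_nonneg_left (pow_le_pow_left₀ hq0 hqp d)
    positivity
  have hS2goal : p ≤ S2 := by nlinarith [hsplit, hsum, key]
  rw [hTmaj]; exact hS2goal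
end

section
/- Consider the regression model Y_i = f*(X_i) + ξ_i with f* in a convex function class ℱ, where the noise ξ_i are independent, satisfy E[ξ_i | X_i] = 0 and sup ξ - inf ξ ≤ 1, and the observed design points X̃_i may differ from X_i. Let f̂ minimize ∑_i (Y_i - f(X̃_i))² over ℱ, let Δ_i = f̂(X_i) - f*(X_i), and let γ² = sup_{f∈ℱ} (1/n)∑_i (f(X_i) - f(X̃_i))². Then the basic inequality ‖Δ‖_n² ≤ (2/n) ξᵀΔ + 11 γ max{γ, ‖ξ‖_n} holds, where ‖v‖_n² = (1/n)∑_i v_i². -/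
open Finset

set_option maxHeartbeats 1000000 in
/-- The perturbed-design basic inequality for least squares over a convex class:
if `f̂` minimizes `∑_i (Y_i - f(X̃_i))²` over the convex class `ℱ` and
`γ²` bounds the design-mismatch `(1/n)∑_i (f(X_i) - f(X̃_i))²` over `ℱ`, then
`‖Δ‖_n² ≤ (2/n) ξᵀΔ + 11 γ max{γ, ‖ξ‖_n}` for `Δ_i = f̂(X_i) - f*(X_i)`. -/
theorem basic_inequality {α : Type*} (n : ℕ) (hn : 0 < n)
    (F : Set (α → ℝ)) (hconv : Convex ℝ F)
    (fstar fhat : α → ℝ) (hfstar : fstar ∈ F) (hfhat : fhat ∈ F)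
    (X Xt : Fin n → α) (ξ Y : Fin n → ℝ)
    (hY : ∀ i, Y i = fstar (X i) + ξ i)
    (hmin : ∀ f ∈ F, ∑ i, (Y i - fhat (Xt i)) ^ 2 ≤ ∑ i, (Y i - f (Xt i)) ^ 2)
    (γ : ℝ) (hγ0 : 0 ≤ γ)
    (hγ : ∀ f ∈ F, (1 / n : ℝ) * ∑ i, (f (X i) - f (Xt i)) ^ 2 ≤ γ ^ 2) :
    (1 / n : ℝ) * ∑ i, (fhat (X i) - fstar (X i)) ^ 2 ≤
      (2 / n : ℝ) * ∑ i, ξ i * (fhat (X i) - fstar (X i)) +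
        11 * γ * max γ (Real.sqrt ((1 / n : ℝ) * ∑ i, ξ i ^ 2)) := by
  set N : ℝ := (n : ℝ) with hNdef
  have hN : (0 : ℝ) < N := by rw [hNdef]; exact_mod_cast hn
  -- notation
  set w : Fin n → ℝ := fun i => fhat (Xt i) - fstar (Xt i) with hw
  set d : Fin n → ℝ := fun i => fhat (X i) - fhat (Xt i) with hd
  set e : Fin n → ℝ := fun i => fstar (X i) - fstar (Xt i) with he
  set M : ℝ := max γ (Real.sqrt ((1 / N) * ∑ i, ξ i ^ 2)) with hM
  have hγM : γ ≤ M := le_max_left _ _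
  have hM0 : 0 ≤ M := le_trans hγ0 hγM
  -- residual identity
  have hres : ∀ i, Y i - fhat (Xt i) = ξ i + e i - w i := by
    intro i; rw [hY i]; simp only [he, hw]; ring
  -- the variational inequality from convexity
  have hS : 0 ≤ ∑ i, (ξ i + e i - w i) * w i := by
    set S : ℝ := ∑ i, (ξ i + e i - w i) * w i with hSdef
    set Q : ℝ := ∑ i, (w i) ^ 2 with hQdef
    have hQ0 : 0 ≤ Q := Finset.sum_nonneg fun i _ => sq_nonneg _
    have ht : ∀ t : ℝ, 0 < t → t ≤ 1 → 0 ≤ 2 * t * S + t ^ 2 * Q := by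
      intro t ht0 ht1
      have hft : ((1 - t) • fhat + t • fstar) ∈ F :=
        hconv hfhat hfstar (by linarith) (le_of_lt ht0) (by ring)
      have h := hmin _ hft
      have h3 : ∑ i, (Y i - ((1 - t) • fhat + t • fstar) (Xt i)) ^ 2
          = ∑ i, ((ξ i + e i - w i) ^ 2 + (2 * t * ((ξ i + e i - w i) * w i)
              + t ^ 2 * (w i) ^ 2)) := by
        refine Finset.sum_congr rfl fun i _ => ?_
        have h0 : Y i - ((1 - t) • fhat + t • fstar) (Xt i)
            = (Y i - fhat (Xt i)) + t * w i := by
          simp only [Pi.add_apply, Pi.smul_apply, smul_eq_mul, hw]; ring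
        rw [h0, hres i]; ring
      have h4 : ∑ i, (Y i - fhat (Xt i)) ^ 2 = ∑ i, (ξ i + e i - w i) ^ 2 :=
        Finset.sum_congr rfl fun i _ => by rw [hres i]
      rw [h3, h4, Finset.sum_add_distrib, Finset.sum_add_distrib,
        ← Finset.mul_sum, ← Finset.mul_sum] at h
      rw [hSdef, hQdef]
      linarith
    by_contra hScon
    push_neg at hScon
    rcases eq_or_lt_of_le hQ0 with hQ | hQ
    · have := ht 1 one_pos le_rfl
      rw [← hQ] at this; nlinarith
    · set t : ℝ := min 1 (-S / Q) with htdef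
      have ht0 : 0 < t := lt_min one_pos (div_pos (by linarith) hQ)
      have ht1 : t ≤ 1 := min_le_left _ _
      have htS : t ≤ -S / Q := min_le_right _ _
      have htQ : t * Q ≤ -S := by
        rw [le_div_iff₀ hQ] at htS; linarith
      have := ht t ht0 ht1
      nlinarith
  -- mismatch bounds
  have sum_le_of_avg : ∀ f ∈ F, ∑ i, (f (X i) - f (Xt i)) ^ 2 ≤ N * γ ^ 2 := by
    intro f hf
    have h := mul_le_mul_of_nonneg_left (hγ f hf) (le_of_lt hN)
    have h2 : N * (1 / N * ∑ i, (f (X i) - f (Xt i)) ^ 2)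
        = ∑ i, (f (X i) - f (Xt i)) ^ 2 := by field_simp
    linarith
  have hdb : ∑ i, (d i) ^ 2 ≤ N * γ ^ 2 := sum_le_of_avg fhat hfhat
  have heb : ∑ i, (e i) ^ 2 ≤ N * γ ^ 2 := sum_le_of_avg fstar hfstar
  -- bound on ∑ (d-e)^2
  have hde : ∑ i, (d i - e i) ^ 2 ≤ 4 * (N * γ ^ 2) := by
    have h : ∀ i ∈ Finset.univ (α := Fin n),
        (d i - e i) ^ 2 ≤ 2 * (d i) ^ 2 + 2 * (e i) ^ 2 := fun i _ => by nlinarith [sq_nonneg (d i + e i)]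
    have := Finset.sum_le_sum h
    rw [Finset.sum_add_distrib, ← Finset.mul_sum, ← Finset.mul_sum] at this
    linarith
  -- Cauchy–Schwarz for the cross term
  have hxin : Real.sqrt ((1 / N) * ∑ i, ξ i ^ 2) ≤ M := le_max_right _ _
  have hxi2 : ∑ i, ξ i ^ 2 ≤ N * M ^ 2 := by
    have h0 : (0:ℝ) ≤ (1 / N) * ∑ i, ξ i ^ 2 :=
      mul_nonneg (by positivity) (Finset.sum_nonneg fun i _ => sq_nonneg _)
    have := Real.sq_sqrt h0
    have h2 : (1 / N) * ∑ i, ξ i ^ 2 ≤ M ^ 2 := by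
      calc (1 / N) * ∑ i, ξ i ^ 2 = Real.sqrt ((1 / N) * ∑ i, ξ i ^ 2) ^ 2 := this.symm
        _ ≤ M ^ 2 := by
            have := Real.sqrt_nonneg ((1 / N) * ∑ i, ξ i ^ 2)
            nlinarith
    have h3 := mul_le_mul_of_nonneg_left h2 (le_of_lt hN)
    have h4 : N * (1 / N * ∑ i, ξ i ^ 2) = ∑ i, ξ i ^ 2 := by field_simp
    linarith
  have hcs : - ∑ i, ξ i * (d i - e i) ≤ 2 * (N * (M * γ)) := by
    have h1 : (∑ i, ξ i * (d i - e i)) ^ 2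
        ≤ (∑ i, ξ i ^ 2) * ∑ i, (d i - e i) ^ 2 :=
      Finset.sum_mul_sq_le_sq_mul_sq _ _ _
    have h2 : (∑ i, ξ i ^ 2) * ∑ i, (d i - e i) ^ 2
        ≤ (N * M ^ 2) * (4 * (N * γ ^ 2)) := by
      have hA : (0:ℝ) ≤ ∑ i, ξ i ^ 2 := Finset.sum_nonneg fun i _ => sq_nonneg _
      have hB : (0:ℝ) ≤ ∑ i, (d i - e i) ^ 2 := Finset.sum_nonneg fun i _ => sq_nonneg _
      nlinarith
    have h3 : (∑ i, ξ i * (d i - e i)) ^ 2 ≤ (2 * (N * (M * γ))) ^ 2 := by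
      calc (∑ i, ξ i * (d i - e i)) ^ 2 ≤ (N * M ^ 2) * (4 * (N * γ ^ 2)) := le_trans h1 h2
        _ = (2 * (N * (M * γ))) ^ 2 := by ring
    have hpos : (0:ℝ) ≤ 2 * (N * (M * γ)) := by positivity
    nlinarith [h3, hpos]
  -- main pointwise identity and assembly
  have key : ∑ i, (fhat (X i) - fstar (X i)) ^ 2
      - 2 * ∑ i, ξ i * (fhat (X i) - fstar (X i))
      ≤ ∑ i, (d i) ^ 2 + ∑ i, (d i - e i) ^ 2 - 2 * ∑ i, ξ i * (d i - e i) := by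
    have hid : ∑ i, ((fhat (X i) - fstar (X i)) ^ 2
        - 2 * (ξ i * (fhat (X i) - fstar (X i)))
        - (d i) ^ 2 - (d i - e i) ^ 2 + 2 * (ξ i * (d i - e i)))
        = ∑ i, (-(w i - d i) ^ 2 - 2 * ((ξ i + e i - w i) * w i)) := by
      refine Finset.sum_congr rfl fun i _ => ?_
      have hΔ : fhat (X i) - fstar (X i) = w i + d i - e i := by
        simp only [hw, hd, he]; ring
      rw [hΔ]; ring
    have hsq : 0 ≤ ∑ i, (w i - d i) ^ 2 := Finset.sum_nonneg fun i _ => sq_nonneg _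
    have hexp : ∑ i, ((fhat (X i) - fstar (X i)) ^ 2
        - 2 * (ξ i * (fhat (X i) - fstar (X i)))
        - (d i) ^ 2 - (d i - e i) ^ 2 + 2 * (ξ i * (d i - e i)))
        = ∑ i, (fhat (X i) - fstar (X i)) ^ 2
          - 2 * ∑ i, ξ i * (fhat (X i) - fstar (X i))
          - ∑ i, (d i) ^ 2 - ∑ i, (d i - e i) ^ 2 + 2 * ∑ i, ξ i * (d i - e i) := by
      simp [Finset.sum_add_distrib, Finset.sum_sub_distrib, Finset.mul_sum]
    have hexp2 : ∑ i, (-(w i - d i) ^ 2 - 2 * ((ξ i + e i - w i) * w i))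
        = - ∑ i, (w i - d i) ^ 2 - 2 * ∑ i, (ξ i + e i - w i) * w i := by
      simp [Finset.sum_sub_distrib, Finset.mul_sum, Finset.sum_neg_distrib]
    rw [hexp, hexp2] at hid
    linarith
  -- put the bounds together: RHS ≤ 9 N γ M ≤ 11 N γ M
  have key2 : ∑ i, (fhat (X i) - fstar (X i)) ^ 2
      ≤ 2 * ∑ i, ξ i * (fhat (X i) - fstar (X i)) + N * (11 * γ * M) := by
    have hγ2M : N * γ ^ 2 ≤ N * (γ * M) := by
      have h := mul_le_mul_of_nonneg_left (mul_le_mul_of_nonneg_left hγM hγ0) hN.le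
      nlinarith [h]
    have hNγM : 0 ≤ N * (γ * M) := by positivity
    linarith [key, hdb, hde, hcs, hγ2M, hNγM]
  -- divide by N
  have h1N : (0:ℝ) < 1 / N := by positivity
  have := mul_le_mul_of_nonneg_left key2 (le_of_lt h1N)
  calc (1 / N) * ∑ i, (fhat (X i) - fstar (X i)) ^ 2
      ≤ (1 / N) * (2 * ∑ i, ξ i * (fhat (X i) - fstar (X i)) + N * (11 * γ * M)) := this
    _ = (2 / N) * ∑ i, ξ i * (fhat (X i) - fstar (X i)) + 11 * γ * M := by
        field_simp
end

section
/- Let V be a random vector in ℝ^d with E[‖V‖⁴] < ∞, let u* ∈ ℝ^d, and let 𝓕 be the class of L-Lipschitz functions σ : ℝ → [0,1]. For θ ∈ ℝ^d and σ ∈ 𝓕, define g_{θ,σ}(v) = v₁ σ(-⟨v, θ⟩). Then for any θ with ‖θ - u*‖₂ ≤ δ and any σ, σ* ∈ 𝓕: ‖g_{θ,σ}(V) - g_{u*,σ*}(V)‖_{L²} ≤ E[‖V‖² 1{‖V‖ ≥ M}]^{1/2} + √2 M (‖σ(-⟨V,u*⟩) - σ*(-⟨V,u*⟩)‖_{L²}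 + L ‖θ - u*‖₂ ‖V‖_{L²}) for every M > 0. -/
set_option maxHeartbeats 1000000


open MeasureTheory RealInnerProductSpace

private lemma my_sqrt_add_le {a b : ℝ} (ha : 0 ≤ a) (hb : 0 ≤ b) :
    Real.sqrt (a + b) ≤ Real.sqrt a + Real.sqrt b := by
  have h : a + b ≤ (Real.sqrt a + Real.sqrt b) ^ 2 := by
    nlinarith [Real.sq_sqrt ha, Real.sq_sqrt hb, Real.sqrt_nonneg a, Real.sqrt_nonneg b]
  calc Real.sqrt (a + b) ≤ Real.sqrt ((Real.sqrt a + Real.sqrt b) ^ 2) := Real.sqrt_le_sqrt h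
    _ = Real.sqrt a + Real.sqrt b := Real.sqrt_sq (by positivity)

private lemma my_coord_le_norm {d : ℕ} (v : EuclideanSpace ℝ (Fin d)) (i : Fin d) :
    |v i| ≤ ‖v‖ := by
  rw [EuclideanSpace.norm_eq]
  have h : ‖v i‖ ^ 2 ≤ ∑ j, ‖v j‖ ^ 2 :=
    Finset.single_le_sum (f := fun j => ‖v j‖ ^ 2) (fun j _ => sq_nonneg _) (Finset.mem_univ i)
  calc |v i| = Real.sqrt (‖v i‖ ^ 2) := by
        rw [Real.sqrt_sq_eq_abs]; simp [Real.norm_eq_abs, abs_abs]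
    _ ≤ _ := Real.sqrt_le_sqrt h

/-- `L²(P)` continuity of the loss-gradient coordinate `g_{θ,σ}(v) = v₁ σ(-⟨v,θ⟩)`
jointly in the parameter `θ` and the link `σ`: for `‖θ - u*‖ ≤ δ` and `L`-Lipschitz links
`σ, σ*` with values in `[0,1]`, and any truncation level `M > 0`,
`‖g_{θ,σ}(V) - g_{u*,σ*}(V)‖_{L²} ≤ E[‖V‖² 1{‖V‖ ≥ M}]^{1/2}
  + √2 M (‖σ(-⟪V,u*⟫) - σ*(-⟪V,u*⟫)‖_{L²} + L ‖θ - u*‖ ‖V‖_{L²})`. -/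
theorem gradient_class_L2_continuity {Ω : Type*} [MeasurableSpace Ω]
    (μ : Measure Ω) [IsProbabilityMeasure μ] {d : ℕ} (hd : 0 < d)
    (V : Ω → EuclideanSpace ℝ (Fin d)) (hV : Measurable V)
    (hV4 : Integrable (fun ω => ‖V ω‖ ^ 4) μ)
    (u θ : EuclideanSpace ℝ (Fin d)) (δ : ℝ) (hθ : ‖θ - u‖ ≤ δ)
    (L : ℝ) (hL : 0 ≤ L) (σ σs : ℝ → ℝ)
    (hσ01 : ∀ s, σ s ∈ Set.Icc (0 : ℝ) 1) (hσs01 : ∀ s, σs s ∈ Set.Icc (0 : ℝ) 1)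
    (hσlip : ∀ s t, |σ s - σ t| ≤ L * |s - t|)
    (hσslip : ∀ s t, |σs s - σs t| ≤ L * |s - t|)
    (M : ℝ) (hM : 0 < M) :
    Real.sqrt (∫ ω, (V ω ⟨0, hd⟩ * σ (-⟪V ω, θ⟫) - V ω ⟨0, hd⟩ * σs (-⟪V ω, u⟫)) ^ 2 ∂μ) ≤
      Real.sqrt (∫ ω, (if M ≤ ‖V ω‖ then ‖V ω‖ ^ 2 else 0) ∂μ) +
        Real.sqrt 2 * M *
          (Real.sqrt (∫ ω, (σ (-⟪V ω, u⟫) - σs (-⟪V ω, u⟫)) ^ 2 ∂μ) +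
            L * ‖θ - u‖ * Real.sqrt (∫ ω, ‖V ω‖ ^ 2 ∂μ)) := by
  set t : ℝ := ‖θ - u‖ with htdef
  have ht0 : (0:ℝ) ≤ t := norm_nonneg _
  -- continuity of the links
  have hσc : Continuous σ := by
    have : LipschitzWith (Real.toNNReal L) σ :=
      LipschitzWith.of_dist_le_mul fun x y => by
        simpa [Real.dist_eq, Real.coe_toNNReal L hL] using hσlip x y
    exact this.continuous
  have hσsc : Continuous σs := by
    have : LipschitzWith (Real.toNNReal L) σs :=
      LipschitzWith.of_dist_le_mul fun x y => by
        simpa [Real.dist_eq, Real.coe_toNNReal L hL] using hσslip x y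
    exact this.continuous
  -- measurability helpers
  have hVn : Measurable fun ω => ‖V ω‖ := hV.norm
  have hip : ∀ w : EuclideanSpace ℝ (Fin d), Measurable fun ω => ⟪V ω, w⟫ := fun w =>
    (continuous_inner.comp (Continuous.prodMk continuous_id continuous_const)).measurable.comp hV
  have hcoord : Measurable fun ω => V ω ⟨0, hd⟩ :=
    ((EuclideanSpace.proj (⟨0, hd⟩ : Fin d)).continuous.measurable).comp hV
  have hD : Measurable fun ω =>
      (V ω ⟨0, hd⟩ * σ (-⟪V ω, θ⟫) - V ω ⟨0, hd⟩ * σs (-⟪V ω, u⟫)) :=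
    (hcoord.mul (hσc.measurable.comp ((hip θ).neg))).sub
      (hcoord.mul (hσsc.measurable.comp ((hip u).neg)))
  have hΔ : Measurable fun ω => (σ (-⟪V ω, u⟫) - σs (-⟪V ω, u⟫)) :=
    (hσc.measurable.comp ((hip u).neg)).sub (hσsc.measurable.comp ((hip u).neg))
  -- integrability of ‖V‖²
  have hV2 : Integrable (fun ω => ‖V ω‖ ^ 2) μ := by
    refine Integrable.mono' (hV4.add (integrable_const 1)) (hVn.pow_const 2).aestronglyMeasurable
      (Filter.Eventually.of_forall fun ω => ?_)
    have h0 : (0:ℝ) ≤ ‖V ω‖ := norm_nonneg _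
    simp only [Pi.add_apply]
    rw [Real.norm_eq_abs, abs_of_nonneg (by positivity)]
    nlinarith [sq_nonneg (‖V ω‖ ^ 2 - 1)]
  -- integrability of the tail integrand
  have htail : Integrable (fun ω => (if M ≤ ‖V ω‖ then ‖V ω‖ ^ 2 else 0)) μ := by
    refine Integrable.mono' hV2 ?_ (Filter.Eventually.of_forall fun ω => ?_)
    · exact (Measurable.ite (measurableSet_le measurable_const hVn)
        (hVn.pow_const 2) measurable_const).aestronglyMeasurable
    · rw [Real.norm_eq_abs]
      split <;> simp [abs_of_nonneg (sq_nonneg (‖V ω‖))] <;> positivity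
  -- integrability of Δσ²
  have hΔ2 : Integrable (fun ω => (σ (-⟪V ω, u⟫) - σs (-⟪V ω, u⟫)) ^ 2) μ := by
    refine Integrable.mono' (integrable_const 1) (hΔ.pow_const 2).aestronglyMeasurable
      (Filter.Eventually.of_forall fun ω => ?_)
    have h1 := hσ01 (-⟪V ω, u⟫); have h2 := hσs01 (-⟪V ω, u⟫)
    rw [Real.norm_eq_abs, abs_of_nonneg (sq_nonneg _)]
    nlinarith [h1.1, h1.2, h2.1, h2.2]
  -- pointwise bound on D²
  have hpt : ∀ ω,
      (V ω ⟨0, hd⟩ * σ (-⟪V ω, θ⟫) - V ω ⟨0, hd⟩ * σs (-⟪V ω, u⟫)) ^ 2 ≤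
        (if M ≤ ‖V ω‖ then ‖V ω‖ ^ 2 else 0) +
          (2 * M ^ 2 * (σ (-⟪V ω, u⟫) - σs (-⟪V ω, u⟫)) ^ 2 +
            2 * M ^ 2 * L ^ 2 * t ^ 2 * ‖V ω‖ ^ 2) := by
    intro ω
    set a := σ (-⟪V ω, θ⟫) with ha
    set b := σs (-⟪V ω, u⟫) with hb
    set c := σ (-⟪V ω, u⟫) with hc
    have hva : |V ω ⟨0, hd⟩| ≤ ‖V ω‖ := my_coord_le_norm (V ω) _
    have hab : |a - b| ≤ 1 := by
      have h1 := hσ01 (-⟪V ω, θ⟫); have h2 := hσs01 (-⟪V ω, u⟫)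
      rw [abs_le]; constructor <;> [linarith [h1.1, h2.2]; linarith [h1.2, h2.1]]
    have hD1 : |V ω ⟨0, hd⟩ * a - V ω ⟨0, hd⟩ * b| ≤ ‖V ω‖ * |a - b| := by
      rw [← mul_sub, abs_mul]
      exact mul_le_mul_of_nonneg_right hva (abs_nonneg _)
    by_cases hcase : M ≤ ‖V ω‖
    · rw [if_pos hcase]
      have h1 : |V ω ⟨0, hd⟩ * a - V ω ⟨0, hd⟩ * b| ≤ ‖V ω‖ := by
        calc _ ≤ ‖V ω‖ * |a - b| := hD1
          _ ≤ ‖V ω‖ * 1 := mul_le_mul_of_nonneg_left hab (norm_nonneg _)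
          _ = ‖V ω‖ := mul_one _
      have h2 : (V ω ⟨0, hd⟩ * a - V ω ⟨0, hd⟩ * b) ^ 2 ≤ ‖V ω‖ ^ 2 := by
        rw [← Real.sqrt_le_sqrt_iff (sq_nonneg _), Real.sqrt_sq_eq_abs,
          Real.sqrt_sq (norm_nonneg _)]; exact h1
      nlinarith [sq_nonneg (c - b), sq_nonneg (L * t * ‖V ω‖), sq_nonneg M, hM.le]
    · rw [if_neg hcase]
      push_neg at hcase
      -- |a - c| ≤ L t ‖V ω‖
      have hac : |a - c| ≤ L * t * ‖V ω‖ := by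
        have h1 := hσlip (-⟪V ω, θ⟫) (-⟪V ω, u⟫)
        have h2 : |(-⟪V ω, θ⟫) - (-⟪V ω, u⟫)| ≤ ‖V ω‖ * t := by
          have : (-⟪V ω, θ⟫) - (-⟪V ω, u⟫) = -⟪V ω, θ - u⟫ := by
            rw [inner_sub_right]; ring
          rw [this, abs_neg, ← Real.norm_eq_abs]
          calc ‖⟪V ω, θ - u⟫‖ ≤ ‖V ω‖ * ‖θ - u‖ := norm_inner_le_norm _ _
            _ = ‖V ω‖ * t := rfl
        calc |a - c| ≤ L * |(-⟪V ω, θ⟫) - (-⟪V ω, u⟫)| := h1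
          _ ≤ L * (‖V ω‖ * t) := mul_le_mul_of_nonneg_left h2 hL
          _ = L * t * ‖V ω‖ := by ring
      have habs : |V ω ⟨0, hd⟩ * a - V ω ⟨0, hd⟩ * b| ≤ M * |c - b| + M * (L * t * ‖V ω‖) := by
        have h3 : |a - b| ≤ |a - c| + |c - b| := abs_sub_le a c b
        have h4 : ‖V ω‖ * |a - b| ≤ M * (|c - b| + L * t * ‖V ω‖) := by
          have h5 : ‖V ω‖ * |a - b| ≤ ‖V ω‖ * (|c - b| + L * t * ‖V ω‖) := by
            apply mul_le_mul_of_nonneg_left _ (norm_nonneg _)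
            calc |a - b| ≤ |a - c| + |c - b| := h3
              _ ≤ L * t * ‖V ω‖ + |c - b| := add_le_add_left hac _
              _ = |c - b| + L * t * ‖V ω‖ := by ring
          refine h5.trans (mul_le_mul_of_nonneg_right hcase.le ?_)
          have : 0 ≤ L * t * ‖V ω‖ := by positivity
          positivity
        calc |V ω ⟨0, hd⟩ * a - V ω ⟨0, hd⟩ * b| ≤ ‖V ω‖ * |a - b| := hD1
          _ ≤ M * (|c - b| + L * t * ‖V ω‖) := h4
          _ = M * |c - b| + M * (L * t * ‖V ω‖) := by ring
      have hsq : (V ω ⟨0, hd⟩ * a - V ω ⟨0, hd⟩ * b) ^ 2 ≤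
          (M * |c - b| + M * (L * t * ‖V ω‖)) ^ 2 := by
        have h0 : 0 ≤ M * |c - b| + M * (L * t * ‖V ω‖) := by positivity
        calc (V ω ⟨0, hd⟩ * a - V ω ⟨0, hd⟩ * b) ^ 2
            = |V ω ⟨0, hd⟩ * a - V ω ⟨0, hd⟩ * b| ^ 2 := (sq_abs _).symm
          _ ≤ _ := by nlinarith [abs_nonneg (V ω ⟨0, hd⟩ * a - V ω ⟨0, hd⟩ * b)]
      have hexp : (M * |c - b| + M * (L * t * ‖V ω‖)) ^ 2 ≤
          2 * M ^ 2 * (c - b) ^ 2 + 2 * M ^ 2 * L ^ 2 * t ^ 2 * ‖V ω‖ ^ 2 := by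
        have : |c - b| ^ 2 = (c - b) ^ 2 := sq_abs _
        nlinarith [sq_nonneg (M * |c - b| - M * (L * t * ‖V ω‖))]
      linarith [hsq.trans hexp]
  -- integral bound
  have hD2int : Integrable
      (fun ω => (V ω ⟨0, hd⟩ * σ (-⟪V ω, θ⟫) - V ω ⟨0, hd⟩ * σs (-⟪V ω, u⟫)) ^ 2) μ := by
    refine Integrable.mono'
      (htail.add ((hΔ2.const_mul (2 * M ^ 2)).add (hV2.const_mul (2 * M ^ 2 * L ^ 2 * t ^ 2))))
      (hD.pow_const 2).aestronglyMeasurable (Filter.Eventually.of_forall fun ω => ?_)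
    simp only [Pi.add_apply]
    rw [Real.norm_eq_abs, abs_of_nonneg (sq_nonneg _)]
    simpa [add_assoc, mul_comm, mul_assoc, mul_left_comm] using hpt ω
  have hsum : Integrable (fun ω => 2 * M ^ 2 * (σ (-⟪V ω, u⟫) - σs (-⟪V ω, u⟫)) ^ 2 +
      2 * M ^ 2 * L ^ 2 * t ^ 2 * ‖V ω‖ ^ 2) μ :=
    (hΔ2.const_mul (2 * M ^ 2)).add (hV2.const_mul (2 * M ^ 2 * L ^ 2 * t ^ 2))
  have hbig : Integrable (fun ω => (if M ≤ ‖V ω‖ then ‖V ω‖ ^ 2 else 0) +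
      (2 * M ^ 2 * (σ (-⟪V ω, u⟫) - σs (-⟪V ω, u⟫)) ^ 2 +
        2 * M ^ 2 * L ^ 2 * t ^ 2 * ‖V ω‖ ^ 2)) μ := htail.add hsum
  have hIle : (∫ ω, (V ω ⟨0, hd⟩ * σ (-⟪V ω, θ⟫) - V ω ⟨0, hd⟩ * σs (-⟪V ω, u⟫)) ^ 2 ∂μ) ≤
      (∫ ω, (if M ≤ ‖V ω‖ then ‖V ω‖ ^ 2 else 0) ∂μ) +
        (2 * M ^ 2 * (∫ ω, (σ (-⟪V ω, u⟫) - σs (-⟪V ω, u⟫)) ^ 2 ∂μ) +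
          2 * M ^ 2 * L ^ 2 * t ^ 2 * (∫ ω, ‖V ω‖ ^ 2 ∂μ)) := by
    have h := integral_mono hD2int hbig hpt
    rw [integral_add htail hsum,
      integral_add (hΔ2.const_mul (2 * M ^ 2)) (hV2.const_mul (2 * M ^ 2 * L ^ 2 * t ^ 2)),
      integral_const_mul, integral_const_mul] at h
    exact h
  -- nonnegativity of the integrals
  have hA0 : (0:ℝ) ≤ ∫ ω, (if M ≤ ‖V ω‖ then ‖V ω‖ ^ 2 else 0) ∂μ :=
    integral_nonneg fun ω => by split <;> positivity
  have hB0 : (0:ℝ) ≤ ∫ ω, (σ (-⟪V ω, u⟫) - σs (-⟪V ω, u⟫)) ^ 2 ∂μ :=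
    integral_nonneg fun ω => sq_nonneg _
  have hC0 : (0:ℝ) ≤ ∫ ω, ‖V ω‖ ^ 2 ∂μ := integral_nonneg fun ω => sq_nonneg _
  set A := ∫ ω, (if M ≤ ‖V ω‖ then ‖V ω‖ ^ 2 else 0) ∂μ
  set B := ∫ ω, (σ (-⟪V ω, u⟫) - σs (-⟪V ω, u⟫)) ^ 2 ∂μ
  set C := ∫ ω, ‖V ω‖ ^ 2 ∂μ
  clear_value A B C
  calc Real.sqrt (∫ ω, (V ω ⟨0, hd⟩ * σ (-⟪V ω, θ⟫) - V ω ⟨0, hd⟩ * σs (-⟪V ω, u⟫)) ^ 2 ∂μ)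
      ≤ Real.sqrt (A + (2 * M ^ 2 * B + 2 * M ^ 2 * L ^ 2 * t ^ 2 * C)) :=
        Real.sqrt_le_sqrt hIle
    _ ≤ Real.sqrt A + Real.sqrt (2 * M ^ 2 * B + 2 * M ^ 2 * L ^ 2 * t ^ 2 * C) :=
        my_sqrt_add_le hA0 (by positivity)
    _ ≤ Real.sqrt A + Real.sqrt 2 * M * (Real.sqrt B + L * t * Real.sqrt C) := by
        gcongr
        have h1 : Real.sqrt (2 * M ^ 2 * B + 2 * M ^ 2 * L ^ 2 * t ^ 2 * C) ≤
            Real.sqrt (2 * M ^ 2 * B) + Real.sqrt (2 * M ^ 2 * L ^ 2 * t ^ 2 * C) :=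
          my_sqrt_add_le (by positivity) (by positivity)
        have h2 : Real.sqrt (2 * M ^ 2 * B) = Real.sqrt 2 * M * Real.sqrt B := by
          rw [show 2 * M ^ 2 * B = (Real.sqrt 2 * M) ^ 2 * B by
              rw [mul_pow, Real.sq_sqrt (by norm_num : (0:ℝ) ≤ 2)],
            Real.sqrt_mul (by positivity), Real.sqrt_sq (by positivity)]
        have h3 : Real.sqrt (2 * M ^ 2 * L ^ 2 * t ^ 2 * C) =
            Real.sqrt 2 * M * (L * t * Real.sqrt C) := by
          rw [show 2 * M ^ 2 * L ^ 2 * t ^ 2 * C = (Real.sqrt 2 * M * (L * t)) ^ 2 * C by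
              rw [mul_pow, mul_pow, mul_pow, Real.sq_sqrt (by norm_num : (0:ℝ) ≤ 2)]; ring,
            Real.sqrt_mul (by positivity), Real.sqrt_sq (by positivity)]
          ring
        calc Real.sqrt (2 * M ^ 2 * B + 2 * M ^ 2 * L ^ 2 * t ^ 2 * C)
            ≤ Real.sqrt (2 * M ^ 2 * B) + Real.sqrt (2 * M ^ 2 * L ^ 2 * t ^ 2 * C) := h1
          _ = Real.sqrt 2 * M * (Real.sqrt B + L * t * Real.sqrt C) := by
              rw [h2, h3]; ring
end
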